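/- arXiv:0910.2886 — 6 statements merged into one kernel-verified Lean document; each statement's English description precedes it below -/
import Mathlib

section
/- Let f : [0,1]×ℝ²→ℝ be continuous, let ω ∈ C₀ and let u ∈ C¹₀. Then u satisfies u'(t) + ∫₀ᵗ f(s, u(s), u'(s)) ds = u'(0) + ω(t) for all t ∈ [0,1] if and only if u satisfies the integral equation u(t) = ∫₀¹ K(t,s) f(s, u(s), u'(s)) ds + Y_t(ω) for all t ∈ [0,1]. -/
/-!
Write `g(s) = f(s, u(s), u'(s))`. For `t ∈ [0,1]` one has
`∫₀¹ K(t,s) g(s) ds = t ∫₀¹ (1-s) g(s) ds - ∫₀ᵗ (t-s) g(s) ds`,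
so the right-hand side `v` of the integral equation is differentiable on `[0,1]` with
`v'(t) = C - ∫₀ᵗ g + ω(t)` for a constant `C`, and `v(0) = v(1) = 0`.
If `u = v`, differentiating gives the first equation. Conversely, the first equation says
that `u' - v'` is constant, so `u - v` is affine; vanishing at both endpoints, it is zero.
Continuity of `g` and `ω` is only known on `[0,1]`, so both are first extended
continuously to `ℝ`.
-/

open MeasureTheory

/-- The Green's function of `-d²/dt²` with Dirichlet boundary conditions. -/
noncomputable def Kgreen (t s : ℝ) : ℝ := min t s - t * s

noncomputable def Yw (ω : ℝ → ℝ) (t : ℝ) : ℝ :=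
  -t * (∫ s in (0:ℝ)..1, ω s) + ∫ s in (0:ℝ)..t, ω s

open Set

theorem ContinuousOn.exists_continuous_eqOn_Icc {α β : Type*} [LinearOrder α]
    [TopologicalSpace α] [OrderTopology α] [TopologicalSpace β] {a b : α} (hab : a ≤ b)
    {f : α → β} (hf : ContinuousOn f (Icc a b)) :
    ∃ g : α → β, Continuous g ∧ EqOn g f (Icc a b) :=
  ⟨IccExtend hab ((Icc a b).domRestrict f), continuous_IccExtend_iff.mpr hf.domRestrict,
    fun _ hx => IccExtend_of_mem _ _ hx⟩

theorem eq_affine_of_hasDerivWithinAt_const {a b c : ℝ} {w : ℝ → ℝ}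
    (hw : ∀ t ∈ Icc a b, HasDerivWithinAt w c (Icc a b) t) :
    ∀ t ∈ Icc a b, w t = w a + c * (t - a) := by
  have hline : ∀ t, HasDerivAt (fun t => w a + c * (t - a)) c t := fun t => by
    simpa using ((hasDerivAt_id t).sub_const a).const_mul c |>.const_add (w a)
  refine eq_of_has_deriv_right_eq (fun t ht => ?_) (fun t _ => (hline t).hasDerivWithinAt)
    (fun t ht => (hw t ht).continuousWithinAt)
    (fun t _ => (hline t).continuousAt.continuousWithinAt) (by simp)
  exact (hw t (mem_Icc_of_Ico ht)).mono_of_mem_nhdsWithin (Icc_mem_nhdsGE_of_mem ht)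

theorem integral_congr_of_eqOn_Icc {E : Type*} [NormedAddCommGroup E] [NormedSpace ℝ E]
    {f g : ℝ → E} {a b t : ℝ} (h : EqOn f g (Icc a b)) (ht : t ∈ Icc a b) :
    ∫ s in a..t, f s = ∫ s in a..t, g s :=
  intervalIntegral.integral_congr
    (h.mono (by rw [uIcc_of_le ht.1]; exact Icc_subset_Icc_right ht.2))

section Green

variable {G : ℝ → ℝ}

theorem integral_Kgreen_mul (hG : Continuous G) {t : ℝ} (ht : t ∈ Icc (0 : ℝ) 1) :
    ∫ s in (0 : ℝ)..1, Kgreen t s * G s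
      = t * (∫ s in (0 : ℝ)..1, (1 - s) * G s) - ∫ s in (0 : ℝ)..t, (t - s) * G s := by
  -- `K(t,s) = t(1-s) - (t-s)⁺`, and `(t-s)⁺ = t - min t s` vanishes on `[t,1]`.
  have hsplit :
      ∫ s in (0 : ℝ)..1, (t - min t s) * G s = ∫ s in (0 : ℝ)..t, (t - s) * G s := by
    rw [← intervalIntegral.integral_add_adjacent_intervals (b := t)
      ((by fun_prop : Continuous _).intervalIntegrable _ _)
      ((by fun_prop : Continuous _).intervalIntegrable _ _)]
    have hleft :
        ∫ s in (0 : ℝ)..t, (t - min t s) * G s = ∫ s in (0 : ℝ)..t, (t - s) * G s :=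
      intervalIntegral.integral_congr fun s hs => by
        rw [uIcc_of_le ht.1] at hs
        simp only [min_eq_right hs.2]
    have hright : ∫ s in t..1, (t - min t s) * G s = 0 := by
      rw [← intervalIntegral.integral_zero (a := t) (b := 1) (μ := volume)]
      refine intervalIntegral.integral_congr fun s hs => ?_
      rw [uIcc_of_le ht.2] at hs
      simp [min_eq_left hs.1]
    rw [hleft, hright, add_zero]
  calc ∫ s in (0 : ℝ)..1, Kgreen t s * G s
      = ∫ s in (0 : ℝ)..1, (t * ((1 - s) * G s) - (t - min t s) * G s) :=
        intervalIntegral.integral_congr fun s _ => by simp only [Kgreen]; ring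
    _ = _ := by
        rw [intervalIntegral.integral_sub ((by fun_prop : Continuous _).intervalIntegrable _ _)
          ((by fun_prop : Continuous _).intervalIntegrable _ _),
          intervalIntegral.integral_const_mul, hsplit]

theorem hasDerivAt_integral_sub_mul (hG : Continuous G) (t : ℝ) :
    HasDerivAt (fun t => ∫ s in (0 : ℝ)..t, (t - s) * G s) (∫ s in (0 : ℝ)..t, G s) t := by
  have hexpand : (fun t => ∫ s in (0 : ℝ)..t, (t - s) * G s)
      = fun t => t * (∫ s in (0 : ℝ)..t, G s) - ∫ s in (0 : ℝ)..t, s * G s := by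
    funext t
    simp only [sub_mul]
    rw [intervalIntegral.integral_sub ((by fun_prop : Continuous _).intervalIntegrable _ _)
      ((by fun_prop : Continuous _).intervalIntegrable _ _), intervalIntegral.integral_const_mul]
  rw [hexpand]
  exact ((hasDerivAt_id' t).mul (hG.integral_hasStrictDerivAt 0 t).hasDerivAt).sub
    ((by fun_prop : Continuous fun s => s * G s).integral_hasStrictDerivAt 0 t).hasDerivAt
    |>.congr_deriv (by ring)

theorem hasDerivWithinAt_integral_Kgreen_mul (hG : Continuous G) {t : ℝ}
    (ht : t ∈ Icc (0 : ℝ) 1) :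
    HasDerivWithinAt (fun t => ∫ s in (0 : ℝ)..1, Kgreen t s * G s)
      ((∫ s in (0 : ℝ)..1, (1 - s) * G s) - ∫ s in (0 : ℝ)..t, G s) (Icc 0 1) t :=
  ((hasDerivAt_mul_const _).sub (hasDerivAt_integral_sub_mul hG t)).hasDerivWithinAt.congr
    (fun _ hx => integral_Kgreen_mul hG hx) (integral_Kgreen_mul hG ht)

end Green

theorem hasDerivAt_Yw {W : ℝ → ℝ} (hW : Continuous W) (t : ℝ) :
    HasDerivAt (Yw W) (-(∫ s in (0 : ℝ)..1, W s) + W t) t := by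
  have h := ((hasDerivAt_neg t).mul_const (∫ s in (0 : ℝ)..1, W s)).add
    (hW.integral_hasStrictDerivAt 0 t).hasDerivAt
  exact h.congr_deriv (by ring)

theorem Yw_zero (W : ℝ → ℝ) : Yw W 0 = 0 := by simp [Yw]

theorem Yw_one (W : ℝ → ℝ) : Yw W 1 = 0 := by simp [Yw]

theorem deriv_add_integral_eq_iff_eq_integral_Kgreen_add_Yw {G W u u' : ℝ → ℝ}
    (hG : Continuous G) (hW : Continuous W) (hW0 : W 0 = 0)
    (hu : ∀ t ∈ Icc (0 : ℝ) 1, HasDerivWithinAt u (u' t) (Icc 0 1) t)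
    (hu0 : u 0 = 0) (hu1 : u 1 = 0) :
    (∀ t ∈ Icc (0 : ℝ) 1, u' t + ∫ s in (0 : ℝ)..t, G s = u' 0 + W t)
    ↔ (∀ t ∈ Icc (0 : ℝ) 1, u t = (∫ s in (0 : ℝ)..1, Kgreen t s * G s) + Yw W t) := by
  set v : ℝ → ℝ := fun t => (∫ s in (0 : ℝ)..1, Kgreen t s * G s) + Yw W t
  set C : ℝ := (∫ s in (0 : ℝ)..1, (1 - s) * G s) - ∫ s in (0 : ℝ)..1, W s
  have hv : ∀ t ∈ Icc (0 : ℝ) 1,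
      HasDerivWithinAt v (C - (∫ s in (0 : ℝ)..t, G s) + W t) (Icc 0 1) t := fun t ht =>
    ((hasDerivWithinAt_integral_Kgreen_mul hG ht).add (hasDerivAt_Yw hW t).hasDerivWithinAt)
      |>.congr_deriv (by ring)
  have hv0 : v 0 = 0 := by simp [v, integral_Kgreen_mul hG (left_mem_Icc.2 zero_le_one), Yw_zero]
  have hv1 : v 1 = 0 := by simp [v, integral_Kgreen_mul hG (right_mem_Icc.2 zero_le_one), Yw_one]
  constructor
  · intro hode
    have hw : ∀ t ∈ Icc (0 : ℝ) 1,
        HasDerivWithinAt (fun t => u t - v t) (u' 0 - C) (Icc 0 1) t := fun t ht =>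
      ((hu t ht).sub (hv t ht)).congr_deriv (by linarith [hode t ht])
    have haffine := eq_affine_of_hasDerivWithinAt_const hw
    have hslope : u' 0 - C = 0 := by
      simpa [hu0, hu1, hv0, hv1, eq_comm] using haffine 1 (right_mem_Icc.2 zero_le_one)
    intro t ht
    have hut := haffine t ht
    rw [hslope, hu0, hv0] at hut
    linarith
  · intro heq t ht
    have hderiv : ∀ r ∈ Icc (0 : ℝ) 1, u' r = C - (∫ s in (0 : ℝ)..r, G s) + W r :=
      fun r hr => (uniqueDiffOn_Icc zero_lt_one r hr).eq_deriv _ (hu r hr)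
        ((hv r hr).congr (fun x hx => heq x hx) (heq r hr))
    rw [hderiv t ht, hderiv 0 (left_mem_Icc.2 zero_le_one), intervalIntegral.integral_same,
      hW0]
    ring

/-- equivalence of the integral formulation and the Green's-function
integral equation. -/
theorem stmt1 (f : ℝ → ℝ → ℝ → ℝ)
    (hf : ContinuousOn (fun p : ℝ × ℝ × ℝ => f p.1 p.2.1 p.2.2)
      (Set.Icc 0 1 ×ˢ (Set.univ : Set (ℝ × ℝ))))
    (ω : ℝ → ℝ) (hω : ContinuousOn ω (Set.Icc 0 1)) (hω0 : ω 0 = 0)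
    (u u' : ℝ → ℝ)
    (hu : ∀ t ∈ Set.Icc (0:ℝ) 1, HasDerivWithinAt u (u' t) (Set.Icc 0 1) t)
    (hu'c : ContinuousOn u' (Set.Icc 0 1))
    (hu0 : u 0 = 0) (hu1 : u 1 = 0) :
    (∀ t ∈ Set.Icc (0:ℝ) 1,
        u' t + ∫ s in (0:ℝ)..t, f s (u s) (u' s) = u' 0 + ω t)
    ↔ (∀ t ∈ Set.Icc (0:ℝ) 1,
        u t = (∫ s in (0:ℝ)..1, Kgreen t s * f s (u s) (u' s)) + Yw ω t) := by
  have huc : ContinuousOn u (Icc 0 1) := fun t ht => (hu t ht).continuousWithinAt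
  have hg : ContinuousOn (fun s => f s (u s) (u' s)) (Icc 0 1) :=
    hf.comp (continuousOn_id.prodMk (huc.prodMk hu'c)) fun s hs => ⟨hs, trivial⟩
  obtain ⟨G, hG, hGg⟩ := hg.exists_continuous_eqOn_Icc zero_le_one
  obtain ⟨W, hW, hWω⟩ := hω.exists_continuous_eqOn_Icc zero_le_one
  have h01 : (1 : ℝ) ∈ Icc 0 1 := right_mem_Icc.2 zero_le_one
  have hYw : ∀ t ∈ Icc (0 : ℝ) 1, Yw ω t = Yw W t := fun t ht => by
    simp only [Yw, integral_congr_of_eqOn_Icc hWω.symm ht,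
      integral_congr_of_eqOn_Icc hWω.symm h01]
  refine (forall₂_congr fun t ht => ?_).trans
    ((deriv_add_integral_eq_iff_eq_integral_Kgreen_add_Yw hG hW
      (by rw [hWω (left_mem_Icc.2 zero_le_one), hω0]) hu hu0 hu1).trans
      (forall₂_congr fun t ht => ?_))
  · rw [integral_congr_of_eqOn_Icc hGg.symm ht, hWω ht]
  · rw [hYw t ht, integral_congr_of_eqOn_Icc
      (fun s hs => congrArg (Kgreen t s * ·) (hGg hs).symm) h01]
end

section
/- Let f : [0,1]×ℝ→ℝ be continuous and differentiable with respect to its second argument, and suppose there exist an integer m ≥ 0 and real constants h, k with π²m² < h ≤ ∂f/∂x(t,x) ≤ k < π²(m+1)² for all t ∈ [0,1] and x ∈ ℝ. Then for every ω ∈ C₀ there exists a unique u ∈ C¹₀ satisfying u'(t) + ∫₀ᵗ f(s, u(s)) ds = u'(0) + ω(t) for all t ∈ [0,1]. -/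
open MeasureTheory

/-- `u ∈ C¹₀` (with derivative `u'`) solves the integral equation
`u'(t) + ∫₀ᵗ f(s,u) ds = u'(0) + ω(t)` on `[0,1]`. -/
def SolBVP1 (f : ℝ → ℝ → ℝ) (ω : ℝ → ℝ) (u u' : ℝ → ℝ) : Prop :=
  (∀ t ∈ Set.Icc (0:ℝ) 1, HasDerivWithinAt u (u' t) (Set.Icc 0 1) t) ∧
  ContinuousOn u' (Set.Icc 0 1) ∧ u 0 = 0 ∧ u 1 = 0 ∧
  ∀ t ∈ Set.Icc (0:ℝ) 1,
    u' t + ∫ s in (0:ℝ)..t, f s (u s) = u' 0 + ω t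

/-!
Write `f t x = c x - Φ t x` with `c = (h + k) / 2`. By the mean value theorem `Φ` is
`L`-Lipschitz in `x` with `L = (k - h) / 2`, and `L` is smaller than the distance `d` from `c` to
the Dirichlet spectrum `{n²π² | n ≥ 1}`. Parseval's identity for the sine coefficients (i.e. for
the odd extension of `w` to `[-1, 1]`) turns the two-fold integration by parts
`∫ w'' sin (nπt) = -(nπ)² ∫ w sin (nπt)` into `d ‖w‖₂ ≤ ‖w'' + c w‖₂` whenever `w 0 = w 1 = 0`.

For two solutions, `w = u - v` satisfies `|w'' + c w| ≤ L |w|`, so `w = 0`. For existence, solve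
`w'' + c w = ψ'`, `w 0 = w 1 = 0` by variation of constants and look for a fixed point of
`u ↦ w` with `ψ = ω + ∫ Φ(s, u s) ds`. By the same inequality this map contracts the `L²`
distance by `L / d`, and its increments are bounded in sup norm by their `L²` size, so some
iterate is a contraction for the sup norm.
-/

open Real Set intervalIntegral
open scoped BoundedContinuousFunction

lemma hasDerivAt_sin_mul (σ t : ℝ) : HasDerivAt (fun t => sin (σ * t)) (σ * cos (σ * t)) t := by
  simpa [mul_comm] using ((hasDerivAt_id t).const_mul σ).sin

lemma hasDerivAt_cos_mul (σ t : ℝ) :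
    HasDerivAt (fun t => cos (σ * t)) (-(σ * sin (σ * t))) t := by
  simpa [mul_comm] using ((hasDerivAt_id t).const_mul σ).cos

lemma hasDerivWithinAt_integral_Icc {g : ℝ → ℝ} {a b t : ℝ} (hg : ContinuousOn g (Icc a b))
    (ht : t ∈ Icc a b) : HasDerivWithinAt (fun t => ∫ s in a..t, g s) (g t) (Icc a b) t := by
  have : Fact (t ∈ Icc a b) := ⟨ht⟩
  exact integral_hasDerivWithinAt_right
    ((hg.mono (Icc_subset_Icc le_rfl ht.2)).intervalIntegrable_of_Icc ht.1)
    (hg.stronglyMeasurableAtFilter_nhdsWithin measurableSet_Icc t) (hg t ht)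

lemma eqOn_zero_of_integral_eq_zero {h : ℝ → ℝ} {a b : ℝ} (hab : a < b)
    (hc : ContinuousOn h (Icc a b)) (hnn : ∀ t ∈ Icc a b, 0 ≤ h t)
    (hI : ∫ t in a..b, h t = 0) : EqOn h 0 (Icc a b) := by
  rw [integral_eq_zero_iff_of_le_of_nonneg_ae hab.le
    ((ae_restrict_iff' measurableSet_Ioc).2 (.of_forall fun t ht => hnn t (Ioc_subset_Icc_self ht)))
    (hc.intervalIntegrable_of_Icc hab.le)] at hI
  exact Measure.eqOn_Icc_of_ae_eq volume hab.ne
    (Measure.restrict_congr_set (Ioc_ae_eq_Icc (a := a) (b := b) (μ := volume)) ▸ hI) hc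
    continuousOn_const

lemma sq_integral_abs_le_integral_sq {g : ℝ → ℝ} (hg : Continuous g) :
    (∫ s in (0:ℝ)..1, |g s|) ^ 2 ≤ ∫ s in (0:ℝ)..1, g s ^ 2 := by
  set a := ∫ s in (0:ℝ)..1, |g s|
  have hvar : ∫ s in (0:ℝ)..1, (|g s| - a) ^ 2 = (∫ s in (0:ℝ)..1, g s ^ 2) - a ^ 2 := by
    have h1 : IntervalIntegrable (fun s => g s ^ 2) volume 0 1 := (hg.pow 2).intervalIntegrable _ _
    have h2 : IntervalIntegrable (fun s => 2 * a * |g s|) volume 0 1 :=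
      (continuous_const.mul hg.abs).intervalIntegrable _ _
    have hexp : ∀ s, (|g s| - a) ^ 2 = (g s ^ 2 - 2 * a * |g s|) + a ^ 2 := fun s => by
      rw [sub_sq, sq_abs]; ring
    simp_rw [hexp]
    rw [integral_add (h1.sub h2) intervalIntegrable_const, integral_sub h1 h2,
      intervalIntegral.integral_const_mul]
    simp only [intervalIntegral.integral_const, sub_zero, smul_eq_mul, one_mul]
    ring
  have : 0 ≤ ∫ s in (0:ℝ)..1, (|g s| - a) ^ 2 := integral_nonneg zero_le_one fun s _ => sq_nonneg _
  linarith

lemma intervalIntegrable_and_integral_eq_of_reflect {E : Type*} [NormedAddCommGroup E]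
    [NormedSpace ℝ E] {G A B : ℝ → E} (hA : ContinuousOn A (Icc 0 1))
    (hB : ContinuousOn B (Icc 0 1)) (hGA : EqOn G A (Ioc 0 1))
    (hGB : EqOn (fun x => G (-x)) B (Ioc 0 1)) :
    IntervalIntegrable G volume (-1) 1 ∧ ∫ x in (-1)..1, G x = ∫ x in 0..1, (A x + B x) := by
  have hIoc : uIoc (0:ℝ) 1 = Ioc 0 1 := uIoc_of_le zero_le_one
  have hGi : IntervalIntegrable G volume 0 1 :=
    (hA.intervalIntegrable_of_Icc zero_le_one).congr (hIoc ▸ hGA.symm)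
  have hGni : IntervalIntegrable (fun x => G (-x)) volume 0 1 :=
    (hB.intervalIntegrable_of_Icc zero_le_one).congr (hIoc ▸ hGB.symm)
  have hGi' : IntervalIntegrable G volume (-1) 0 := by
    simpa using (hGni.comp_mul_left (c := -1)).symm
  refine ⟨hGi'.trans hGi, ?_⟩
  rw [← integral_add_adjacent_intervals hGi' hGi, integral_add (hA.intervalIntegrable_of_Icc
    zero_le_one) (hB.intervalIntegrable_of_Icc zero_le_one), add_comm,
    ← integral_congr_ae (.of_forall fun x hx => hGA (hIoc ▸ hx)),
    ← integral_congr_ae (.of_forall fun x hx => hGB (hIoc ▸ hx)), integral_comp_neg, neg_zero]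

section SineSeries

noncomputable def sineCoeff (w : ℝ → ℝ) (n : ℤ) : ℝ := ∫ x in (0:ℝ)..1, w x * sin (n * π * x)

noncomputable def oddExtension (w : ℝ → ℝ) (x : ℝ) : ℂ := if 0 < x then w x else -w (-x)

lemma oddExtension_eqOn (w : ℝ → ℝ) : EqOn (oddExtension w) (fun x => (w x : ℂ)) (Ioc 0 1) :=
  fun _ hx => if_pos hx.1

lemma oddExtension_neg_eqOn (w : ℝ → ℝ) :
    EqOn (fun x => oddExtension w (-x)) (fun x => -(w x : ℂ)) (Ioc 0 1) := fun x hx => by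
  simp [oddExtension, hx.1.le]

lemma exp_neg_mul_I_sub_exp_mul_I (θ : ℝ) :
    Complex.exp (-(θ * Complex.I)) - Complex.exp (θ * Complex.I) = -2 * Complex.I * sin θ := by
  rw [← neg_mul, ← Complex.ofReal_neg, Complex.exp_mul_I, Complex.exp_mul_I]
  push_cast
  rw [Complex.cos_neg, Complex.sin_neg]
  ring

lemma fourierCoeffOn_oddExtension {w : ℝ → ℝ} (hw : ContinuousOn w (Icc 0 1)) (n : ℤ) :
    fourierCoeffOn (by norm_num : (-1:ℝ) < 1) (oddExtension w) n
      = -Complex.I * sineCoeff w n := by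
  have hwc : ContinuousOn (fun x => (w x : ℂ)) (Icc 0 1) :=
    Complex.continuous_ofReal.comp_continuousOn hw
  have hfourier : ∀ x : ℝ, fourier (-n) (x : AddCircle (1 - (-1) : ℝ))
      = Complex.exp (-((n * π * x : ℝ) * Complex.I)) := fun x => by
    rw [fourier_coe_apply]; congr 1; push_cast; ring
  obtain ⟨-, hsplit⟩ := intervalIntegrable_and_integral_eq_of_reflect
    (G := fun x => fourier (-n) (x : AddCircle (1 - (-1) : ℝ)) • oddExtension w x)
    (A := fun x => Complex.exp (-((n * π * x : ℝ) * Complex.I)) * w x)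
    (B := fun x => -(Complex.exp ((n * π * x : ℝ) * Complex.I) * w x))
    ((by fun_prop : Continuous _).continuousOn.mul hwc)
    ((by fun_prop : Continuous _).continuousOn.mul hwc).neg
    (fun x hx => by simp only [hfourier, oddExtension_eqOn w hx, smul_eq_mul])
    (fun x hx => by
      simp only [hfourier, oddExtension_neg_eqOn w hx, smul_eq_mul]; push_cast; ring_nf)
  have hsin : ∀ x : ℝ, Complex.exp (-((n * π * x : ℝ) * Complex.I)) * w x
      + -(Complex.exp ((n * π * x : ℝ) * Complex.I) * w x)
      = -2 * Complex.I * ((w x * sin (n * π * x) : ℝ) : ℂ) := fun x => by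
    rw [← sub_eq_add_neg, ← sub_mul, exp_neg_mul_I_sub_exp_mul_I]; push_cast; ring
  rw [fourierCoeffOn_eq_integral, hsplit]
  simp_rw [hsin]
  rw [intervalIntegral.integral_const_mul, intervalIntegral.integral_ofReal, sineCoeff,
    Complex.real_smul]
  push_cast
  ring

theorem hasSum_sq_sineCoeff {w : ℝ → ℝ} (hw : ContinuousOn w (Icc 0 1)) :
    HasSum (fun n : ℤ => sineCoeff w n ^ 2) (∫ x in (0:ℝ)..1, w x ^ 2) := by
  have hwc : ContinuousOn (fun x => (w x : ℂ)) (Icc 0 1) :=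
    Complex.continuous_ofReal.comp_continuousOn hw
  obtain ⟨hint, -⟩ := intervalIntegrable_and_integral_eq_of_reflect hwc hwc.neg
    (oddExtension_eqOn w) (oddExtension_neg_eqOn w)
  obtain ⟨hint_sq, hsq⟩ := intervalIntegrable_and_integral_eq_of_reflect
    (G := fun x => ‖oddExtension w x‖ ^ 2) (A := fun x => w x ^ 2) (B := fun x => w x ^ 2)
    (hw.pow 2) (hw.pow 2) (fun x hx => by simp [oddExtension_eqOn w hx])
    (fun x hx => by simp [oddExtension_neg_eqOn w hx])
  have hL2 : MemLp (oddExtension w) 2 (volume.restrict (Ioc (-1) 1)) :=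
    (memLp_two_iff_integrable_sq_norm hint.1.aestronglyMeasurable).2 hint_sq.1
  convert hasSum_sq_fourierCoeffOn (by norm_num) hL2 using 1
  · ext n
    rw [fourierCoeffOn_oddExtension hw, norm_mul, norm_neg, Complex.norm_I, one_mul,
      Complex.norm_real, Real.norm_eq_abs, sq_abs]
  · simp only [hsq, ← two_mul, intervalIntegral.integral_const_mul, smul_eq_mul]
    ring

theorem sineCoeff_of_hasDerivWithinAt {w w' w'' : ℝ → ℝ}
    (hw : ∀ t ∈ Icc (0:ℝ) 1, HasDerivWithinAt w (w' t) (Icc 0 1) t)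
    (hw' : ∀ t ∈ Icc (0:ℝ) 1, HasDerivWithinAt w' (w'' t) (Icc 0 1) t)
    (hw'' : ContinuousOn w'' (Icc 0 1)) (h0 : w 0 = 0) (h1 : w 1 = 0) (n : ℤ) :
    sineCoeff w'' n = -(n * π) ^ 2 * sineCoeff w n := by
  rw [← uIcc_of_le zero_le_one] at hw hw' hw''
  have hw'c : ContinuousOn w' (uIcc 0 1) := fun x hx => (hw' x hx).continuousWithinAt
  have hsin1 : sin (n * π * 1) = 0 := by simp [sin_int_mul_pi]
  have hparts_sin := integral_mul_deriv_eq_deriv_mul_of_hasDerivWithinAt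
    (fun x _ => (hasDerivAt_sin_mul (n * π) x).hasDerivWithinAt) hw'
    ((by fun_prop : Continuous _).intervalIntegrable _ _) hw''.intervalIntegrable
  have hparts_cos := integral_mul_deriv_eq_deriv_mul_of_hasDerivWithinAt
    (fun x _ => ((hasDerivAt_cos_mul (n * π) x).const_mul (n * π)).hasDerivWithinAt) hw
    ((by fun_prop : Continuous _).intervalIntegrable _ _) hw'c.intervalIntegrable
  simp only [sineCoeff]
  simp_rw [mul_comm (w'' _), mul_comm (w _)]
  rw [hparts_sin]
  simp only [hsin1, mul_zero, zero_mul, sin_zero, sub_zero, zero_sub]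
  rw [hparts_cos, h0, h1]
  simp only [mul_zero, sub_zero, mul_neg, neg_mul, intervalIntegral.integral_neg, mul_assoc,
    intervalIntegral.integral_const_mul]
  ring

theorem sq_mul_integral_sq_le_integral_sq {w w' w'' : ℝ → ℝ} {c d : ℝ} (hd : 0 ≤ d)
    (hgap : ∀ n : ℤ, n ≠ 0 → d ≤ |c - (n * π) ^ 2|)
    (hw : ∀ t ∈ Icc (0:ℝ) 1, HasDerivWithinAt w (w' t) (Icc 0 1) t)
    (hw' : ∀ t ∈ Icc (0:ℝ) 1, HasDerivWithinAt w' (w'' t) (Icc 0 1) t)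
    (hw'' : ContinuousOn w'' (Icc 0 1)) (h0 : w 0 = 0) (h1 : w 1 = 0) :
    d ^ 2 * ∫ t in (0:ℝ)..1, w t ^ 2 ≤ ∫ t in (0:ℝ)..1, (w'' t + c * w t) ^ 2 := by
  have hwc : ContinuousOn w (Icc 0 1) := fun t ht => (hw t ht).continuousWithinAt
  have hcoeff : ∀ n : ℤ, sineCoeff (fun t => w'' t + c * w t) n
      = (c - (n * π) ^ 2) * sineCoeff w n := fun n => by
    have hsin : ContinuousOn (fun x : ℝ => sin (n * π * x)) (Icc 0 1) := by fun_prop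
    have hi'' : IntervalIntegrable (fun x => w'' x * sin (n * π * x)) volume 0 1 :=
      (hw''.mul hsin).intervalIntegrable_of_Icc zero_le_one
    have hi : IntervalIntegrable (fun x => w x * sin (n * π * x)) volume 0 1 :=
      (hwc.mul hsin).intervalIntegrable_of_Icc zero_le_one
    rw [sub_mul, ← neg_add_eq_sub, ← neg_mul, ← sineCoeff_of_hasDerivWithinAt hw hw' hw'' h0 h1 n]
    simp only [sineCoeff, add_mul, mul_assoc c]
    rw [integral_add hi'' (hi.const_mul c), intervalIntegral.integral_const_mul]
  refine hasSum_le (fun n => ?_) ((hasSum_sq_sineCoeff hwc).mul_left (d ^ 2))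
    (hasSum_sq_sineCoeff (hw''.add (continuousOn_const.mul hwc)))
  rw [hcoeff, mul_pow]
  rcases eq_or_ne n 0 with rfl | hn
  · simp [sineCoeff]
  · have := pow_le_pow_left₀ hd (hgap n hn) 2
    rw [sq_abs] at this
    gcongr

end SineSeries

section DirichletSolution

variable (σ : ℝ) (ψ : ℝ → ℝ)

/- Variation of constants: for `sin σ ≠ 0`, `dirichletSol σ ψ` solves `w'' + σ² w = ψ'`,
`w 0 = w 1 = 0`, as `w t = A sin (σ t) + ∫₀ᵗ cos (σ (t - s)) ψ s ds` with `cos (σ (t - s))`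
expanded; the constant `A = dirichletCoeff σ ψ` is fixed by `w 1 = 0`. -/

noncomputable def cosMoment (t : ℝ) : ℝ := ∫ s in (0:ℝ)..t, cos (σ * s) * ψ s

noncomputable def sinMoment (t : ℝ) : ℝ := ∫ s in (0:ℝ)..t, sin (σ * s) * ψ s

noncomputable def dirichletCoeff : ℝ :=
  -(cos σ * cosMoment σ ψ 1 + sin σ * sinMoment σ ψ 1) / sin σ

noncomputable def dirichletSol (t : ℝ) : ℝ :=
  dirichletCoeff σ ψ * sin (σ * t) + cos (σ * t) * cosMoment σ ψ t + sin (σ * t) * sinMoment σ ψ t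

noncomputable def dirichletSolDeriv (t : ℝ) : ℝ :=
  σ * (dirichletCoeff σ ψ * cos (σ * t) + cos (σ * t) * sinMoment σ ψ t
    - sin (σ * t) * cosMoment σ ψ t) + ψ t

variable {σ ψ}

lemma hasDerivAt_cosMoment (hψ : Continuous ψ) (t : ℝ) :
    HasDerivAt (cosMoment σ ψ) (cos (σ * t) * ψ t) t :=
  (by fun_prop : Continuous fun s => cos (σ * s) * ψ s).integral_hasStrictDerivAt 0 t |>.hasDerivAt

lemma hasDerivAt_sinMoment (hψ : Continuous ψ) (t : ℝ) :
    HasDerivAt (sinMoment σ ψ) (sin (σ * t) * ψ t) t :=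
  (by fun_prop : Continuous fun s => sin (σ * s) * ψ s).integral_hasStrictDerivAt 0 t |>.hasDerivAt

lemma hasDerivAt_dirichletSol (hψ : Continuous ψ) (t : ℝ) :
    HasDerivAt (dirichletSol σ ψ) (dirichletSolDeriv σ ψ t) t := by
  have := (((hasDerivAt_sin_mul σ t).const_mul (dirichletCoeff σ ψ)).add
    ((hasDerivAt_cos_mul σ t).mul (hasDerivAt_cosMoment (σ := σ) hψ t))).add
    ((hasDerivAt_sin_mul σ t).mul (hasDerivAt_sinMoment (σ := σ) hψ t))
  refine this.congr_deriv ?_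
  simp only [dirichletSolDeriv]
  linear_combination ψ t * sin_sq_add_cos_sq (σ * t)

lemma hasDerivAt_dirichletSolDeriv_sub (hψ : Continuous ψ) (t : ℝ) :
    HasDerivAt (fun t => dirichletSolDeriv σ ψ t - ψ t) (-(σ ^ 2 * dirichletSol σ ψ t)) t := by
  have := (((hasDerivAt_cos_mul σ t).const_mul (dirichletCoeff σ ψ)).add
    ((hasDerivAt_cos_mul σ t).mul (hasDerivAt_sinMoment (σ := σ) hψ t))).sub
    ((hasDerivAt_sin_mul σ t).mul (hasDerivAt_cosMoment (σ := σ) hψ t)) |>.const_mul σ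
  refine (this.congr_deriv ?_).congr_of_eventuallyEq (.of_forall fun s => ?_)
  · simp only [dirichletSol]; ring
  · simp only [dirichletSolDeriv, Pi.add_apply, Pi.sub_apply, Pi.mul_apply]; ring

lemma continuous_dirichletSol (hψ : Continuous ψ) : Continuous (dirichletSol σ ψ) :=
  continuous_iff_continuousAt.2 fun t => (hasDerivAt_dirichletSol hψ t).continuousAt

lemma continuous_dirichletSolDeriv (hψ : Continuous ψ) : Continuous (dirichletSolDeriv σ ψ) := by
  have : Continuous fun t => dirichletSolDeriv σ ψ t - ψ t :=
    continuous_iff_continuousAt.2 fun t => (hasDerivAt_dirichletSolDeriv_sub hψ t).continuousAt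
  convert this.add hψ using 1
  ext t; simp

lemma hasDerivAt_dirichletSolDeriv {ψ' : ℝ → ℝ} (hψ : ∀ t, HasDerivAt ψ (ψ' t) t) (t : ℝ) :
    HasDerivAt (dirichletSolDeriv σ ψ) (ψ' t - σ ^ 2 * dirichletSol σ ψ t) t := by
  have hψc : Continuous ψ := continuous_iff_continuousAt.2 fun t => (hψ t).continuousAt
  refine (((hasDerivAt_dirichletSolDeriv_sub (σ := σ) hψc t).add (hψ t)).congr_deriv (by ring))
    |>.congr_of_eventuallyEq (.of_forall fun s => by simp)

@[simp] lemma dirichletSol_zero : dirichletSol σ ψ 0 = 0 := by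
  simp [dirichletSol, cosMoment, sinMoment]

lemma dirichletSol_one (hσ : sin σ ≠ 0) : dirichletSol σ ψ 1 = 0 := by
  simp only [dirichletSol, dirichletCoeff, mul_one]
  field_simp
  ring

lemma dirichletSolDeriv_add_integral (hψ : Continuous ψ) (t : ℝ) :
    dirichletSolDeriv σ ψ t + σ ^ 2 * ∫ s in (0:ℝ)..t, dirichletSol σ ψ s
      = dirichletSolDeriv σ ψ 0 + ψ t - ψ 0 := by
  have := integral_eq_sub_of_hasDerivAt (fun s _ => hasDerivAt_dirichletSolDeriv_sub (σ := σ) hψ s)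
    ((continuous_const.mul (continuous_dirichletSol hψ)).neg.intervalIntegrable 0 t)
  rw [intervalIntegral.integral_neg, intervalIntegral.integral_const_mul] at this
  linarith

lemma dirichletSol_sub {ψ₁ ψ₂ : ℝ → ℝ} (h₁ : Continuous ψ₁) (h₂ : Continuous ψ₂) :
    dirichletSol σ (ψ₁ - ψ₂) = dirichletSol σ ψ₁ - dirichletSol σ ψ₂ := by
  have hcos : ∀ t, cosMoment σ (ψ₁ - ψ₂) t = cosMoment σ ψ₁ t - cosMoment σ ψ₂ t := fun t => by
    simp only [cosMoment, Pi.sub_apply, mul_sub]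
    exact integral_sub ((by fun_prop : Continuous _).intervalIntegrable _ _)
      ((by fun_prop : Continuous _).intervalIntegrable _ _)
  have hsin : ∀ t, sinMoment σ (ψ₁ - ψ₂) t = sinMoment σ ψ₁ t - sinMoment σ ψ₂ t := fun t => by
    simp only [sinMoment, Pi.sub_apply, mul_sub]
    exact integral_sub ((by fun_prop : Continuous _).intervalIntegrable _ _)
      ((by fun_prop : Continuous _).intervalIntegrable _ _)
  ext t
  simp only [dirichletSol, dirichletCoeff, hcos, hsin, Pi.sub_apply]
  ring

lemma abs_integral_mul_le_of_abs_le {g : ℝ → ℝ} (hg : ∀ s, |g s| ≤ 1) {M t : ℝ}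
    (hM : ∀ s ∈ Icc (0:ℝ) 1, |ψ s| ≤ M) (ht : t ∈ Icc (0:ℝ) 1) :
    |∫ s in (0:ℝ)..t, g s * ψ s| ≤ M := by
  have hM0 : 0 ≤ M := (abs_nonneg _).trans (hM 0 (by simp))
  have := norm_integral_le_of_norm_le_const (a := 0) (b := t) (C := M) fun s hs => by
    rw [uIoc_of_le ht.1] at hs
    rw [Real.norm_eq_abs, abs_mul]
    simpa using mul_le_mul (hg s) (hM s ⟨hs.1.le, hs.2.trans ht.2⟩) (abs_nonneg _) zero_le_one
  rw [Real.norm_eq_abs, sub_zero, abs_of_nonneg ht.1] at this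
  nlinarith [ht.2]

lemma abs_dirichletSol_le (hσ : sin σ ≠ 0) {M t : ℝ} (hM : ∀ s ∈ Icc (0:ℝ) 1, |ψ s| ≤ M)
    (ht : t ∈ Icc (0:ℝ) 1) : |dirichletSol σ ψ t| ≤ (2 / |sin σ| + 2) * M := by
  have hC : ∀ t ∈ Icc (0:ℝ) 1, |cosMoment σ ψ t| ≤ M :=
    fun t ht => abs_integral_mul_le_of_abs_le (fun s => abs_cos_le_one _) hM ht
  have hS : ∀ t ∈ Icc (0:ℝ) 1, |sinMoment σ ψ t| ≤ M :=
    fun t ht => abs_integral_mul_le_of_abs_le (fun s => abs_sin_le_one _) hM ht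
  have h1 : (1:ℝ) ∈ Icc (0:ℝ) 1 := by simp
  have hM0 : 0 ≤ M := (abs_nonneg _).trans (hM 0 (by simp))
  have hA : |dirichletCoeff σ ψ| ≤ 2 / |sin σ| * M := by
    rw [dirichletCoeff, abs_div, abs_neg, div_mul_eq_mul_div, div_le_div_iff_of_pos_right
      (abs_pos.2 hσ)]
    calc |cos σ * cosMoment σ ψ 1 + sin σ * sinMoment σ ψ 1|
        ≤ |cos σ| * |cosMoment σ ψ 1| + |sin σ| * |sinMoment σ ψ 1| := by
          rw [← abs_mul, ← abs_mul]; exact abs_add_le _ _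
      _ ≤ 1 * M + 1 * M := by
          gcongr
          exacts [abs_cos_le_one _, hC 1 h1, abs_sin_le_one _, hS 1 h1]
      _ = 2 * M := by ring
  calc |dirichletSol σ ψ t|
      ≤ |dirichletCoeff σ ψ| * |sin (σ * t)| + |cos (σ * t)| * |cosMoment σ ψ t|
        + |sin (σ * t)| * |sinMoment σ ψ t| := by
        simp only [dirichletSol, ← abs_mul]
        exact abs_add_three _ _ _
    _ ≤ 2 / |sin σ| * M * 1 + 1 * M + 1 * M := by
        gcongr
        exacts [abs_sin_le_one _, abs_cos_le_one _, hC t ht, abs_sin_le_one _, hS t ht]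
    _ = (2 / |sin σ| + 2) * M := by ring

end DirichletSolution

theorem exists_fixedPoint_of_sq_dist_le {X : Type*} [MetricSpace X] [CompleteSpace X]
    [Nonempty X] {T : X → X} (δ : X → X → ℝ) {θ C : ℝ} (hθ₀ : 0 ≤ θ) (hθ₁ : θ < 1)
    (hC : 0 ≤ C) (hδ : ∀ x y, δ x y ≤ dist x y ^ 2)
    (hcontr : ∀ x y, δ (T x) (T y) ≤ θ * δ x y)
    (hdom : ∀ x y, dist (T x) (T y) ^ 2 ≤ C * δ x y) :
    ∃ x, T x = x := by
  have hiter : ∀ n x y, δ (T^[n] x) (T^[n] y) ≤ θ ^ n * δ x y := by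
    intro n
    induction n with
    | zero => simp
    | succ n ih =>
      intro x y
      rw [Function.iterate_succ_apply', Function.iterate_succ_apply', pow_succ', mul_assoc]
      exact (hcontr _ _).trans (mul_le_mul_of_nonneg_left (ih x y) hθ₀)
  obtain ⟨n, hn⟩ := exists_pow_lt_of_lt_one (by positivity : (0:ℝ) < 1 / (C + 1)) hθ₁
  have hK : C * θ ^ n < 1 := by
    rw [lt_div_iff₀ (by positivity)] at hn
    nlinarith [pow_nonneg hθ₀ n]
  -- `T^[n + 1]` contracts `dist` by `√(C θ ^ n) < 1`; its fixed point is then fixed by `T`.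
  set K : NNReal := ⟨√(C * θ ^ n), sqrt_nonneg _⟩
  have hcontracting : ContractingWith K (T^[n + 1]) := by
    refine ⟨by rw [← NNReal.coe_lt_coe]; exact (sqrt_lt' one_pos).2 (by simpa using hK), ?_⟩
    refine LipschitzWith.of_dist_le_mul fun x y => ?_
    change _ ≤ √(C * θ ^ n) * _
    rw [← sqrt_sq dist_nonneg, ← sqrt_sq (dist_nonneg (x := x)), ← sqrt_mul (by positivity)]
    refine sqrt_le_sqrt ?_
    calc dist (T^[n + 1] x) (T^[n + 1] y) ^ 2
        ≤ C * δ (T^[n] x) (T^[n] y) := by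
          rw [Function.iterate_succ_apply', Function.iterate_succ_apply']; exact hdom _ _
      _ ≤ C * (θ ^ n * dist x y ^ 2) :=
          mul_le_mul_of_nonneg_left ((hiter n x y).trans
            (mul_le_mul_of_nonneg_left (hδ x y) (pow_nonneg hθ₀ n))) hC
      _ = C * θ ^ n * dist x y ^ 2 := by ring
  set x := ContractingWith.fixedPoint _ hcontracting
  refine ⟨x, (hcontracting.fixedPoint_unique ?_)⟩
  exact (hcontracting.fixedPoint_isFixedPt).map (Function.Commute.iterate_self T (n + 1)).symm

section Forcing

variable {ω : ℝ → ℝ} {Φ : ℝ → ℝ → ℝ}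

lemma continuous_apply_graph (hΦ : Continuous (Function.uncurry Φ)) {v : ℝ → ℝ}
    (hv : Continuous v) : Continuous fun s => Φ s (v s) :=
  hΦ.comp (continuous_id.prodMk hv)

noncomputable def forcing (ω : ℝ → ℝ) (Φ : ℝ → ℝ → ℝ) (v : ℝ → ℝ) (t : ℝ) : ℝ :=
  ω t + ∫ s in (0:ℝ)..t, Φ s (v s)

lemma continuous_forcing (hω : Continuous ω) (hΦ : Continuous (Function.uncurry Φ))
    {v : ℝ → ℝ} (hv : Continuous v) : Continuous (forcing ω Φ v) :=
  hω.add <| continuous_primitive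
    (fun _ _ => (continuous_apply_graph hΦ hv).intervalIntegrable _ _) 0

lemma forcing_sub (hΦ : Continuous (Function.uncurry Φ)) {v w : ℝ → ℝ} (hv : Continuous v)
    (hw : Continuous w) :
    forcing ω Φ v - forcing ω Φ w = fun t => ∫ s in (0:ℝ)..t, (Φ s (v s) - Φ s (w s)) := by
  ext t
  simp only [forcing, Pi.sub_apply]
  rw [integral_sub ((continuous_apply_graph hΦ hv).intervalIntegrable _ _)
    ((continuous_apply_graph hΦ hw).intervalIntegrable _ _)]
  ring

end Forcing

section FixedPoint

variable {σ d L : ℝ} {ω : ℝ → ℝ} {Φ : ℝ → ℝ → ℝ}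

lemma dirichletSol_forcing_sub (hω : Continuous ω) (hΦ : Continuous (Function.uncurry Φ))
    {v w : ℝ → ℝ} (hv : Continuous v) (hw : Continuous w) :
    dirichletSol σ (forcing ω Φ v) - dirichletSol σ (forcing ω Φ w)
      = dirichletSol σ (fun t => ∫ s in (0:ℝ)..t, (Φ s (v s) - Φ s (w s))) := by
  rw [← dirichletSol_sub (continuous_forcing hω hΦ hv) (continuous_forcing hω hΦ hw),
    forcing_sub hΦ hv hw]

lemma integral_sq_dirichletSol_forcing_sub_le (hσ : sin σ ≠ 0) (hd : 0 ≤ d)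
    (hgap : ∀ n : ℤ, n ≠ 0 → d ≤ |σ ^ 2 - (n * π) ^ 2|) (hω : Continuous ω)
    (hΦ : Continuous (Function.uncurry Φ)) (hlip : ∀ t x y, |Φ t x - Φ t y| ≤ L * |x - y|)
    {v w : ℝ → ℝ} (hv : Continuous v) (hw : Continuous w) :
    d ^ 2 * ∫ t in (0:ℝ)..1,
        (dirichletSol σ (forcing ω Φ v) t - dirichletSol σ (forcing ω Φ w) t) ^ 2
      ≤ L ^ 2 * ∫ t in (0:ℝ)..1, (v t - w t) ^ 2 := by
  set g : ℝ → ℝ := fun s => Φ s (v s) - Φ s (w s)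
  have hg : Continuous g := (continuous_apply_graph hΦ hv).sub (continuous_apply_graph hΦ hw)
  have hφ : ∀ t, HasDerivAt (fun t => ∫ s in (0:ℝ)..t, g s) (g t) t :=
    fun t => (hg.integral_hasStrictDerivAt 0 t).hasDerivAt
  have hφc : Continuous fun t => ∫ s in (0:ℝ)..t, g s :=
    continuous_iff_continuousAt.2 fun t => (hφ t).continuousAt
  have hsub := congrFun (dirichletSol_forcing_sub (σ := σ) hω hΦ hv hw)
  simp only [Pi.sub_apply] at hsub
  simp_rw [hsub]
  have hspec := sq_mul_integral_sq_le_integral_sq hd hgap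
    (fun t _ => (hasDerivAt_dirichletSol hφc t).hasDerivWithinAt)
    (fun t _ => (hasDerivAt_dirichletSolDeriv hφ t).hasDerivWithinAt)
    (hg.sub (continuous_const.mul (continuous_dirichletSol hφc))).continuousOn
    dirichletSol_zero (dirichletSol_one hσ)
  simp only [sub_add_cancel] at hspec
  refine hspec.trans ?_
  rw [← intervalIntegral.integral_const_mul]
  refine integral_mono_on zero_le_one ((hg.pow 2).intervalIntegrable _ _)
    ((continuous_const.mul ((hv.sub hw).pow 2)).intervalIntegrable _ _) fun t _ => ?_
  calc g t ^ 2 ≤ (L * |v t - w t|) ^ 2 := by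
        rw [← sq_abs]; exact pow_le_pow_left₀ (abs_nonneg _) (hlip t _ _) 2
    _ = L ^ 2 * (v t - w t) ^ 2 := by rw [mul_pow, sq_abs]

lemma abs_dirichletSol_forcing_sub_le (hσ : sin σ ≠ 0) (hω : Continuous ω)
    (hΦ : Continuous (Function.uncurry Φ)) (hlip : ∀ t x y, |Φ t x - Φ t y| ≤ L * |x - y|)
    {v w : ℝ → ℝ} (hv : Continuous v) (hw : Continuous w) {t : ℝ} (ht : t ∈ Icc (0:ℝ) 1) :
    |dirichletSol σ (forcing ω Φ v) t - dirichletSol σ (forcing ω Φ w) t|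
      ≤ (2 / |sin σ| + 2) * (L * ∫ s in (0:ℝ)..1, |v s - w s|) := by
  have hg : Continuous fun s => Φ s (v s) - Φ s (w s) :=
    (continuous_apply_graph hΦ hv).sub (continuous_apply_graph hΦ hw)
  have hsub := congrFun (dirichletSol_forcing_sub (σ := σ) hω hΦ hv hw) t
  rw [Pi.sub_apply] at hsub
  rw [hsub]
  refine abs_dirichletSol_le hσ (fun s hs => ?_) ht
  calc |∫ r in (0:ℝ)..s, (Φ r (v r) - Φ r (w r))|
      ≤ ∫ r in (0:ℝ)..s, |Φ r (v r) - Φ r (w r)| := abs_integral_le_integral_abs hs.1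
    _ ≤ ∫ r in (0:ℝ)..1, |Φ r (v r) - Φ r (w r)| :=
        integral_mono_interval le_rfl hs.1 hs.2 (.of_forall fun _ => abs_nonneg _)
          (hg.abs.intervalIntegrable _ _)
    _ ≤ ∫ r in (0:ℝ)..1, L * |v r - w r| :=
        integral_mono_on zero_le_one (hg.abs.intervalIntegrable _ _)
          ((continuous_const.mul (hv.sub hw).abs).intervalIntegrable _ _)
          fun r _ => hlip r _ _
    _ = L * ∫ r in (0:ℝ)..1, |v r - w r| := intervalIntegral.integral_const_mul _ _

lemma integral_sq_sub_le_dist_sq (v w : ℝ →ᵇ ℝ) :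
    ∫ t in (0:ℝ)..1, (v t - w t) ^ 2 ≤ dist v w ^ 2 := by
  calc ∫ t in (0:ℝ)..1, (v t - w t) ^ 2 ≤ ∫ t in (0:ℝ)..1, dist v w ^ 2 :=
        integral_mono_on zero_le_one
          (((v.continuous.sub w.continuous).pow 2).intervalIntegrable _ _)
          intervalIntegrable_const fun t _ => by
            rw [← sq_abs, ← Real.dist_eq]
            exact pow_le_pow_left₀ dist_nonneg (v.dist_coe_le_dist t) 2
    _ = dist v w ^ 2 := by simp

theorem exists_eq_dirichletSol_forcing {σ d L : ℝ} {ω : ℝ → ℝ} {Φ : ℝ → ℝ → ℝ}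
    (hσ : sin σ ≠ 0) (hL : 0 ≤ L) (hLd : L < d)
    (hgap : ∀ n : ℤ, n ≠ 0 → d ≤ |σ ^ 2 - (n * π) ^ 2|) (hω : Continuous ω)
    (hΦ : Continuous (Function.uncurry Φ)) (hlip : ∀ t x y, |Φ t x - Φ t y| ≤ L * |x - y|) :
    ∃ u : ℝ → ℝ, Continuous u ∧ ∀ t ∈ Icc (0:ℝ) 1, u t = dirichletSol σ (forcing ω Φ u) t := by
  have hd : 0 < d := hL.trans_lt hLd
  set K := 2 / |sin σ| + 2
  let T : (ℝ →ᵇ ℝ) → (ℝ →ᵇ ℝ) := fun v =>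
    (BoundedContinuousFunction.mkOfCompact
      ⟨fun t : Icc (0:ℝ) 1 => dirichletSol σ (forcing ω Φ v) t,
        (continuous_dirichletSol (continuous_forcing hω hΦ v.continuous)).comp
          continuous_subtype_val⟩).compContinuous ⟨projIcc 0 1 zero_le_one, continuous_projIcc⟩
  have hT : ∀ v t, T v t = dirichletSol σ (forcing ω Φ v) (projIcc 0 1 zero_le_one t) :=
    fun _ _ => rfl
  have hTIcc : ∀ v, ∀ t ∈ Icc (0:ℝ) 1, T v t = dirichletSol σ (forcing ω Φ v) t :=
    fun v t ht => by rw [hT, projIcc_of_mem _ ht]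
  have hcontr : ∀ v w : ℝ →ᵇ ℝ, ∫ t in (0:ℝ)..1, (T v t - T w t) ^ 2
      ≤ L ^ 2 / d ^ 2 * ∫ t in (0:ℝ)..1, (v t - w t) ^ 2 := fun v w => by
    have := integral_sq_dirichletSol_forcing_sub_le hσ hd.le hgap hω hΦ hlip v.continuous
      w.continuous
    have hcongr : ∫ t in (0:ℝ)..1, (T v t - T w t) ^ 2 = ∫ t in (0:ℝ)..1,
        (dirichletSol σ (forcing ω Φ v) t - dirichletSol σ (forcing ω Φ w) t) ^ 2 :=
      integral_congr fun t ht => by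
        rw [uIcc_of_le zero_le_one] at ht
        simp only [hTIcc v t ht, hTIcc w t ht]
    rw [hcongr, div_mul_eq_mul_div, le_div_iff₀ (by positivity)]
    linarith
  have hdom : ∀ v w : ℝ →ᵇ ℝ,
      dist (T v) (T w) ^ 2 ≤ (K * L) ^ 2 * ∫ t in (0:ℝ)..1, (v t - w t) ^ 2 := fun v w => by
    have hI : 0 ≤ ∫ s in (0:ℝ)..1, |v s - w s| :=
      integral_nonneg zero_le_one fun _ _ => abs_nonneg _
    have : dist (T v) (T w) ≤ K * (L * ∫ s in (0:ℝ)..1, |v s - w s|) :=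
      (BoundedContinuousFunction.dist_le (by positivity)).2 fun t => by
        rw [Real.dist_eq, hT, hT]
        exact abs_dirichletSol_forcing_sub_le hσ hω hΦ hlip v.continuous w.continuous
          (projIcc 0 1 zero_le_one t).2
    calc dist (T v) (T w) ^ 2 ≤ (K * (L * ∫ s in (0:ℝ)..1, |v s - w s|)) ^ 2 :=
          pow_le_pow_left₀ dist_nonneg this 2
      _ = (K * L) ^ 2 * (∫ s in (0:ℝ)..1, |v s - w s|) ^ 2 := by ring
      _ ≤ (K * L) ^ 2 * ∫ t in (0:ℝ)..1, (v t - w t) ^ 2 :=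
          mul_le_mul_of_nonneg_left
            (sq_integral_abs_le_integral_sq (v.continuous.sub w.continuous)) (by positivity)
  obtain ⟨u, hu⟩ := exists_fixedPoint_of_sq_dist_le (T := T) _ (by positivity)
    ((div_lt_one (by positivity)).2 (pow_lt_pow_left₀ hLd hL two_ne_zero)) (by positivity)
    integral_sq_sub_le_dist_sq hcontr hdom
  refine ⟨u, u.continuous, fun t ht => ?_⟩
  rw [← hTIcc u t ht, hu]

end FixedPoint

lemma SolBVP1.congr {f g : ℝ → ℝ → ℝ} {ω χ u u' : ℝ → ℝ} (h : SolBVP1 f ω u u')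
    (hfg : ∀ t ∈ Icc (0:ℝ) 1, ∀ x, f t x = g t x) (hωχ : EqOn ω χ (Icc 0 1)) :
    SolBVP1 g χ u u' := by
  obtain ⟨hu, hu', h0, h1, heq⟩ := h
  refine ⟨hu, hu', h0, h1, fun t ht => ?_⟩
  rw [← hωχ ht, ← heq t ht, integral_congr fun s hs => ?_]
  rw [uIcc_of_le ht.1] at hs
  exact (hfg s ⟨hs.1, hs.2.trans ht.2⟩ _).symm

lemma solBVP1_of_eq_dirichletSol {σ : ℝ} {ω u : ℝ → ℝ} {Φ : ℝ → ℝ → ℝ} (hσ : sin σ ≠ 0)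
    (hω : Continuous ω) (hω0 : ω 0 = 0) (hΦ : Continuous (Function.uncurry Φ))
    (hu : Continuous u) (hfix : ∀ t ∈ Icc (0:ℝ) 1, u t = dirichletSol σ (forcing ω Φ u) t) :
    SolBVP1 (fun t x => σ ^ 2 * x - Φ t x) ω u (dirichletSolDeriv σ (forcing ω Φ u)) := by
  have hψ := continuous_forcing hω hΦ hu
  refine ⟨fun t ht => (hasDerivAt_dirichletSol hψ t).hasDerivWithinAt.congr hfix (hfix t ht),
    (continuous_dirichletSolDeriv hψ).continuousOn, by simp [hfix 0 (by simp)],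
    by rw [hfix 1 (by simp), dirichletSol_one hσ], fun t ht => ?_⟩
  have hid := dirichletSolDeriv_add_integral (σ := σ) hψ t
  have hu2 : IntervalIntegrable (fun s => σ ^ 2 * u s) volume 0 t :=
    (continuous_const.mul hu).intervalIntegrable _ _
  have hΦu : IntervalIntegrable (fun s => Φ s (u s)) volume 0 t :=
    (continuous_apply_graph hΦ hu).intervalIntegrable _ _
  beta_reduce
  rw [integral_sub hu2 hΦu,
    intervalIntegral.integral_const_mul, integral_congr fun s hs => hfix s ?_]
  · simp only [forcing, hω0, integral_same, add_zero] at hid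
    linarith
  · rw [uIcc_of_le ht.1] at hs
    exact ⟨hs.1, hs.2.trans ht.2⟩

theorem SolBVP1.eqOn {f : ℝ → ℝ → ℝ} {ω u u' v v' : ℝ → ℝ} {c d L : ℝ}
    (hf : ContinuousOn (fun p : ℝ × ℝ => f p.1 p.2) (Icc 0 1 ×ˢ univ)) (hL : 0 ≤ L) (hLd : L < d)
    (hgap : ∀ n : ℤ, n ≠ 0 → d ≤ |c - (n * π) ^ 2|)
    (hlip : ∀ t ∈ Icc (0:ℝ) 1, ∀ x y, |(c * x - f t x) - (c * y - f t y)| ≤ L * |x - y|)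
    (hu : SolBVP1 f ω u u') (hv : SolBVP1 f ω v v') : EqOn u v (Icc 0 1) := by
  obtain ⟨hu₁, -, hu₀, hu1, hu_eq⟩ := hu
  obtain ⟨hv₁, -, hv₀, hv1, hv_eq⟩ := hv
  have hfu : ContinuousOn (fun s => f s (u s)) (Icc 0 1) :=
    hf.comp (continuousOn_id.prodMk fun t ht => (hu₁ t ht).continuousWithinAt)
      fun s hs => ⟨hs, trivial⟩
  have hfv : ContinuousOn (fun s => f s (v s)) (Icc 0 1) :=
    hf.comp (continuousOn_id.prodMk fun t ht => (hv₁ t ht).continuousWithinAt)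
      fun s hs => ⟨hs, trivial⟩
  set g : ℝ → ℝ := fun s => f s (u s) - f s (v s)
  have hg : ContinuousOn g (Icc 0 1) := hfu.sub hfv
  have hderiv : ∀ t ∈ Icc (0:ℝ) 1, u' t - v' t = (u' 0 - v' 0) - ∫ s in (0:ℝ)..t, g s :=
    fun t ht => by
      have hsub : Icc 0 t ⊆ Icc (0:ℝ) 1 := Icc_subset_Icc le_rfl ht.2
      rw [integral_sub ((hfu.mono hsub).intervalIntegrable_of_Icc ht.1)
        ((hfv.mono hsub).intervalIntegrable_of_Icc ht.1)]
      linarith [hu_eq t ht, hv_eq t ht]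
  have hw' : ∀ t ∈ Icc (0:ℝ) 1,
      HasDerivWithinAt (fun t => u' t - v' t) (-g t) (Icc 0 1) t := fun t ht =>
    ((hasDerivWithinAt_integral_Icc hg ht).const_sub _).congr hderiv (hderiv t ht)
  have hwc : ContinuousOn (fun t => u t - v t) (Icc 0 1) :=
    fun t ht => ((hu₁ t ht).sub (hv₁ t ht)).continuousWithinAt
  have hspec := sq_mul_integral_sq_le_integral_sq (w := fun t => u t - v t) (hL.trans hLd.le)
    hgap (fun t ht => (hu₁ t ht).sub (hv₁ t ht)) hw' hg.neg (by simp [hu₀, hv₀])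
    (by simp [hu1, hv1])
  have hcomp : ∫ t in (0:ℝ)..1, (-g t + c * (u t - v t)) ^ 2
      ≤ L ^ 2 * ∫ t in (0:ℝ)..1, (u t - v t) ^ 2 := by
    rw [← intervalIntegral.integral_const_mul]
    refine integral_mono_on zero_le_one
      (((hg.neg.add (continuousOn_const.mul hwc)).pow 2).intervalIntegrable_of_Icc zero_le_one)
      ((continuousOn_const.mul (hwc.pow 2)).intervalIntegrable_of_Icc zero_le_one) fun t ht => ?_
    have := hlip t ht (u t) (v t)
    calc (-g t + c * (u t - v t)) ^ 2 = |(c * u t - f t (u t)) - (c * v t - f t (v t))| ^ 2 := by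
          rw [sq_abs]; ring
      _ ≤ (L * |u t - v t|) ^ 2 := pow_le_pow_left₀ (abs_nonneg _) this 2
      _ = L ^ 2 * (u t - v t) ^ 2 := by rw [mul_pow, sq_abs]
  have hI : ∫ t in (0:ℝ)..1, (u t - v t) ^ 2 = 0 := by
    have hnn : 0 ≤ ∫ t in (0:ℝ)..1, (u t - v t) ^ 2 :=
      integral_nonneg zero_le_one fun t _ => sq_nonneg _
    have hLd2 : L ^ 2 < d ^ 2 := pow_lt_pow_left₀ hLd hL two_ne_zero
    nlinarith
  intro t ht
  have := eqOn_zero_of_integral_eq_zero zero_lt_one (hwc.pow 2) (fun t _ => sq_nonneg _) hI ht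
  simpa [sub_eq_zero] using this

theorem exists_solBVP1 {f : ℝ → ℝ → ℝ} {ω : ℝ → ℝ} {σ d L : ℝ}
    (hf : ContinuousOn (fun p : ℝ × ℝ => f p.1 p.2) (Icc 0 1 ×ˢ univ))
    (hω : ContinuousOn ω (Icc 0 1)) (hω0 : ω 0 = 0) (hσ : sin σ ≠ 0) (hL : 0 ≤ L)
    (hLd : L < d) (hgap : ∀ n : ℤ, n ≠ 0 → d ≤ |σ ^ 2 - (n * π) ^ 2|)
    (hlip : ∀ t ∈ Icc (0:ℝ) 1, ∀ x y, |(σ ^ 2 * x - f t x) - (σ ^ 2 * y - f t y)| ≤ L * |x - y|) :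
    ∃ u u', SolBVP1 f ω u u' := by
  set p : ℝ → ℝ := fun t => projIcc (0:ℝ) 1 zero_le_one t
  have hp : Continuous p := continuous_subtype_val.comp continuous_projIcc
  have hpI : ∀ t ∈ Icc (0:ℝ) 1, p t = t := fun t ht => by simp [p, projIcc_of_mem _ ht]
  have hpmem : ∀ t, p t ∈ Icc (0:ℝ) 1 := fun t => (projIcc (0:ℝ) 1 zero_le_one t).2
  set Φ : ℝ → ℝ → ℝ := fun t x => σ ^ 2 * x - f (p t) x
  have hΦ : Continuous (Function.uncurry Φ) := (continuous_const.mul continuous_snd).sub <|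
    hf.comp_continuous ((hp.comp continuous_fst).prodMk continuous_snd) fun _ => ⟨hpmem _, trivial⟩
  have hωp : Continuous (ω ∘ p) := hω.comp_continuous hp hpmem
  obtain ⟨u, hu, hfix⟩ := exists_eq_dirichletSol_forcing hσ hL hLd hgap hωp hΦ
    fun t => hlip (p t) (hpmem t)
  exact ⟨u, _, (solBVP1_of_eq_dirichletSol hσ hωp (by simp [hpI 0 (by simp), hω0]) hΦ hu hfix).congr
    (fun t ht x => by simp [Φ, hpI t ht]) (fun t ht => by simp [hpI t ht])⟩

lemma abs_sub_sub_le_of_hasDerivAt {φ φ' : ℝ → ℝ} {h k : ℝ} (hφ : ∀ x, HasDerivAt φ (φ' x) x)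
    (hb : ∀ x, h ≤ φ' x ∧ φ' x ≤ k) (x y : ℝ) :
    |((h + k) / 2 * x - φ x) - ((h + k) / 2 * y - φ y)| ≤ (k - h) / 2 * |x - y| := by
  have := Convex.norm_image_sub_le_of_norm_hasDerivWithin_le (s := univ) (C := (k - h) / 2)
    (fun z _ => (((hasDerivAt_id z).const_mul ((h + k) / 2)).sub (hφ z)).hasDerivWithinAt)
    (fun z _ => by
      rw [Real.norm_eq_abs, abs_le]
      constructor <;> linarith [hb z]) convex_univ (mem_univ y) (mem_univ x)
  simpa [Real.norm_eq_abs] using this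

lemma min_le_abs_sub_sq_int_mul_pi (m : ℕ) (c : ℝ) (n : ℤ) :
    min (c - π ^ 2 * m ^ 2) (π ^ 2 * (m + 1) ^ 2 - c) ≤ |c - (n * π) ^ 2| := by
  have hn : (n : ℝ) ^ 2 = (n.natAbs : ℝ) ^ 2 := by simp [Nat.cast_natAbs, sq_abs]
  rcases le_or_gt n.natAbs m with hnm | hnm
  · have : (n.natAbs : ℝ) ^ 2 ≤ (m : ℝ) ^ 2 := by gcongr
    refine (min_le_left _ _).trans ((le_abs_self _).trans' ?_)
    nlinarith [pi_pos]
  · have : ((m : ℝ) + 1) ^ 2 ≤ (n.natAbs : ℝ) ^ 2 := by gcongr; exact_mod_cast hnm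
    refine (min_le_right _ _).trans ((neg_le_abs _).trans' ?_)
    nlinarith [pi_pos]

lemma sin_ne_zero_of_forall_sq_ne {σ : ℝ} (h : ∀ n : ℤ, σ ^ 2 ≠ (n * π) ^ 2) : sin σ ≠ 0 := by
  rw [Ne, sin_eq_zero_iff]
  rintro ⟨n, rfl⟩
  exact h n rfl

/-- existence and uniqueness under the non-resonance condition
`π²m² < h ≤ ∂f/∂x ≤ k < π²(m+1)²`. -/
theorem stmt3 (f f' : ℝ → ℝ → ℝ)
    (hf : ContinuousOn (fun p : ℝ × ℝ => f p.1 p.2)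
      (Set.Icc 0 1 ×ˢ (Set.univ : Set ℝ)))
    (hdiff : ∀ t ∈ Set.Icc (0:ℝ) 1, ∀ x : ℝ, HasDerivAt (fun z => f t z) (f' t x) x)
    (m : ℕ) (h k : ℝ)
    (hh : Real.pi ^ 2 * (m : ℝ) ^ 2 < h)
    (hbound : ∀ t ∈ Set.Icc (0:ℝ) 1, ∀ x : ℝ, h ≤ f' t x ∧ f' t x ≤ k)
    (hk : k < Real.pi ^ 2 * ((m : ℝ) + 1) ^ 2)
    (ω : ℝ → ℝ) (hω : ContinuousOn ω (Set.Icc 0 1)) (hω0 : ω 0 = 0) :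
    (∃ u u' : ℝ → ℝ, SolBVP1 f ω u u') ∧
    (∀ u u' v v' : ℝ → ℝ, SolBVP1 f ω u u' → SolBVP1 f ω v v' →
      Set.EqOn u v (Set.Icc 0 1)) := by
  have hhk : h ≤ k := (hbound 0 (by simp) 0).1.trans (hbound 0 (by simp) 0).2
  set c := (h + k) / 2 with hc
  set d := min (c - π ^ 2 * m ^ 2) (π ^ 2 * (m + 1) ^ 2 - c)
  have hL : 0 ≤ (k - h) / 2 := by linarith
  have hLd : (k - h) / 2 < d := lt_min (by linarith) (by linarith)
  have hgap : ∀ n : ℤ, d ≤ |c - (n * π) ^ 2| := min_le_abs_sub_sq_int_mul_pi m c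
  have hlip : ∀ t ∈ Icc (0:ℝ) 1, ∀ x y,
      |(c * x - f t x) - (c * y - f t y)| ≤ (k - h) / 2 * |x - y| :=
    fun t ht => abs_sub_sub_le_of_hasDerivAt (hdiff t ht) (hbound t ht)
  refine ⟨?_, fun u u' v v' hu hv => hu.eqOn hf hL hLd (fun n _ => hgap n) hlip hv⟩
  have hσ : √c ^ 2 = c := sq_sqrt (by nlinarith [sq_nonneg π, sq_nonneg (m : ℝ)])
  refine exists_solBVP1 hf hω hω0 (sin_ne_zero_of_forall_sq_ne fun n hn => ?_) hL hLd
    (fun n _ => by rw [hσ]; exact hgap n) (by rw [hσ]; exact hlip)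
  have := hgap n
  rw [← hσ, hn, sub_self, abs_zero] at this
  linarith
end

section
/- Let M be a real Hilbert space and K : M → M a compact, symmetric (self-adjoint), positive definite linear operator whose eigenvalues, listed as reciprocals, are 1/λ₁ ≥ 1/λ₂ ≥ … with 0 < λ₁ ≤ λ₂ ≤ … ≤ λ_n ≤ … (each counted according to multiplicity). Let 𝒜 be a family of bounded symmetric (self-adjoint) linear operators on M and suppose there exist an index n and real numbers μ_n, μ_{n+1} with λ_n < μ_n, μ_{n+1} < λ_{n+1}, and μ_n⟨x,x⟩ ≤ ⟨Ax,x⟩ ≤ μ_{n+1}⟨x,x⟩ for all x ∈ M and all A ∈ 𝒜. Then for each A ∈ 𝒜 the operator I - K∘A has a bounded inverse, and there exists N > 0 such that ‖(I - K∘A)⁻¹‖ ≤ N for all A ∈ 𝒜. -/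
open scoped RealInnerProductSpace
open Module.End

/-!
Put `μ = (μₙ + μₙ₊₁)/2` and `r = (μₙ₊₁ - μₙ)/2`, so that `‖A - μ‖ ≤ r` for every `A ∈ 𝒜`, and let
`δ > r` be the distance from `μ` to the set `{λᵢ}`. Since `1/μ` is not an eigenvalue of the compact
operator `K`, the Fredholm alternative makes `J = I - μK` invertible. The operator `C = J⁻¹K` is
compact and self-adjoint, and its eigenvalues are among the numbers `1/(λᵢ - μ)`, so `‖C‖ ≤ 1/δ`.
Finally `I - KA = J (I - C (A - μ))` with `‖C (A - μ)‖ ≤ r/δ < 1`, and a Neumann series inverts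
the second factor with a bound independent of `A`.
-/

theorem mul_abs_one_div_le_abs_one_sub_mul_one_div {δ l μ : ℝ} (h : δ ≤ |l - μ|) :
    δ * |1 / l| ≤ |1 - μ * (1 / l)| := by
  rcases eq_or_ne l 0 with rfl | hl
  · simp
  rw [show 1 - μ * (1 / l) = (l - μ) * (1 / l) by field_simp, abs_mul]
  exact mul_le_mul_of_nonneg_right h (abs_nonneg _)

theorem le_abs_sub_of_monotone {lam : ℕ → ℝ} (hmono : Monotone lam) {n : ℕ} {μ δ : ℝ}
    (hn : δ ≤ μ - lam n) (hn1 : δ ≤ lam (n + 1) - μ) (i : ℕ) : δ ≤ |lam i - μ| := by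
  rcases le_or_gt i n with hi | hi
  · rw [abs_sub_comm]
    linarith [le_abs_self (μ - lam i), hmono hi]
  · linarith [le_abs_self (lam i - μ), hmono (Nat.succ_le_of_lt hi)]

theorem Units.norm_val_inv_oneSub_le {R : Type*} [NormedRing R] [HasSummableGeomSeries R]
    [NormOneClass R] (t : R) (h : ‖t‖ < 1) :
    ‖(↑(Units.oneSub t h)⁻¹ : R)‖ ≤ (1 - ‖t‖)⁻¹ := by
  have hgeom := tsum_geometric_le_of_norm_lt_one t h
  rwa [norm_one, sub_self, zero_add] at hgeom

theorem exists_inverse_norm_le_of_eq_mul_one_sub {R : Type*} [NormedRing R]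
    [HasSummableGeomSeries R] [NormOneClass R] {X t : R} (J : Rˣ) (hX : X = J * (1 - t))
    {q : ℝ} (ht : ‖t‖ ≤ q) (hq : q < 1) :
    ∃ B : R, B * X = 1 ∧ X * B = 1 ∧ ‖B‖ ≤ (1 - q)⁻¹ * ‖(↑J⁻¹ : R)‖ := by
  set u := J * Units.oneSub t (ht.trans_lt hq)
  have hXu : X = u := by simp [u, hX]
  refine ⟨↑u⁻¹, by rw [hXu, u.inv_mul], by rw [hXu, u.mul_inv], ?_⟩
  calc ‖(↑u⁻¹ : R)‖ ≤ ‖(↑(Units.oneSub t _)⁻¹ : R)‖ * ‖(↑J⁻¹ : R)‖ := by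
        rw [mul_inv_rev, Units.val_mul]
        exact norm_mul_le _ _
    _ ≤ (1 - q)⁻¹ * ‖(↑J⁻¹ : R)‖ := by
        gcongr
        exact (Units.norm_val_inv_oneSub_le t _).trans (by gcongr)

theorem one_sub_mul_eq_mul_one_sub {𝕜 R : Type*} [CommRing 𝕜] [Ring R] [Algebra 𝕜 R] (J : Rˣ)
    {K : R} {μ : 𝕜} (hJ : (J : R) = 1 - μ • K) (A : R) :
    1 - K * A = J * (1 - ↑J⁻¹ * K * (A - μ • 1)) := by
  rw [mul_sub, mul_one, ← mul_assoc, ← mul_assoc, J.mul_inv, one_mul, hJ, mul_sub, mul_smul_comm,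
    mul_one]
  abel

namespace IsCompactOperator

variable {𝕜 X : Type*} [NontriviallyNormedField 𝕜] [NormedAddCommGroup X] [NormedSpace 𝕜 X]

theorem isUnit_one_sub_smul_of_injective [CompleteSpace X] {T : X →L[𝕜] X}
    (hT : IsCompactOperator T) {c : 𝕜} (hinj : Function.Injective (1 - c • T : X →L[𝕜] X)) :
    IsUnit (1 - c • T) := by
  rcases eq_or_ne c 0 with rfl | hc0
  · simp
  have hc : ¬HasEigenvalue (T : Module.End 𝕜 X) c⁻¹ := fun h => by
    obtain ⟨x, hx⟩ := h.exists_hasEigenvector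
    have hTx : T x = c⁻¹ • x := hx.apply_eq_smul
    refine hx.2 (hinj ?_)
    simp [hTx, smul_smul, hc0]
  have hres := (hT.hasEigenvalue_or_mem_resolventSet (inv_ne_zero hc0)).resolve_left hc
  have hfactor : 1 - c • T = c • (algebraMap 𝕜 _ c⁻¹ - T) := by
    rw [smul_sub, Algebra.algebraMap_eq_smul_one, smul_smul, mul_inv_cancel₀ hc0, one_smul]
  rw [hfactor]
  simpa only [Units.smul_def, Units.val_mk0] using hres.smul (Units.mk0 c hc0)

end IsCompactOperator

theorem smul_apply_eq_smul_of_inv_mul_apply_eq_smul {𝕜 X : Type*} [NontriviallyNormedField 𝕜]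
    [NormedAddCommGroup X] [NormedSpace 𝕜 X] {K : X →L[𝕜] X} {μ : 𝕜} (J : (X →L[𝕜] X)ˣ)
    (hJ : (J : X →L[𝕜] X) = 1 - μ • K) {c : 𝕜} {x : X}
    (hx : ((↑J⁻¹ : X →L[𝕜] X) * K) x = c • x) :
    (1 + c * μ) • K x = c • x := by
  have hKx : K x = (J : X →L[𝕜] X) (c • x) := by
    rw [← hx]
    exact (DFunLike.congr_fun J.mul_inv (K x)).symm
  rw [hJ] at hKx
  simp only [map_smul, sub_apply, one_apply_eq_self, smul_apply, smul_sub, smul_smul] at hKx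
  rw [add_smul, one_smul]
  exact add_eq_of_eq_sub hKx

namespace ContinuousLinearMap

variable {𝕜 E : Type*} [RCLike 𝕜] [NormedAddCommGroup E] [InnerProductSpace 𝕜 E]

theorem norm_le_of_forall_hasEigenvalue [CompleteSpace E] {T : E →L[𝕜] E}
    (hT : IsCompactOperator T) (hTsa : IsSelfAdjoint T) {b : ℝ} (hb : 0 ≤ b)
    (h : ∀ c, HasEigenvalue (T : Module.End 𝕜 E) c → ‖c‖ ≤ b) : ‖T‖ ≤ b := by
  have hrad : spectralRadius 𝕜 T ≤ ENNReal.ofReal b := by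
    refine iSup₂_le fun c hc => ?_
    rcases eq_or_ne c 0 with rfl | hc0
    · simp
    rw [← enorm_eq_nnnorm, ← ofReal_norm]
    exact ENNReal.ofReal_le_ofReal (h c ((hT.hasEigenvalue_iff_mem_spectrum hc0).2 hc))
  rw [T.spectralRadius_eq_nnnorm hTsa, ← enorm_eq_nnnorm, ← ofReal_norm] at hrad
  exact (ENNReal.ofReal_le_ofReal_iff hb).1 hrad

end ContinuousLinearMap

section Real

variable {E : Type*} [NormedAddCommGroup E] [InnerProductSpace ℝ E]

theorem ContinuousLinearMap.norm_sub_midpoint_smul_one_le [Nontrivial E] {A : E →L[ℝ] E}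
    (hA : (A : E →ₗ[ℝ] E).IsSymmetric) {a b : ℝ}
    (h : ∀ x, a * ⟪x, x⟫ ≤ ⟪A x, x⟫ ∧ ⟪A x, x⟫ ≤ b * ⟪x, x⟫) :
    ‖A - ((a + b) / 2) • 1‖ ≤ (b - a) / 2 := by
  obtain ⟨x₀, hx₀⟩ := exists_ne (0 : E)
  have hab : a ≤ b :=
    le_of_mul_le_mul_right ((h x₀).1.trans (h x₀).2) (real_inner_self_pos.2 hx₀)
  have hS : ((A - ((a + b) / 2) • 1 : E →L[ℝ] E) : E →ₗ[ℝ] E).IsSymmetric := fun x y => by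
    simpa [inner_sub_left, inner_sub_right, real_inner_smul_left, real_inner_smul_right]
      using hA x y
  rw [norm_eq_iSup_rayleighQuotient _ hS]
  refine ciSup_le fun x => ?_
  have hx := h x
  rw [real_inner_self_eq_norm_sq] at hx
  simp only [rayleighQuotient, reApplyInnerSelf_apply, RCLike.re_to_real, sub_apply, smul_apply,
    one_apply_eq_self, inner_sub_left, real_inner_smul_left, real_inner_self_eq_norm_sq, abs_div,
    abs_sq]
  refine div_le_of_le_mul₀ (sq_nonneg _) (by linarith) (abs_le.2 ⟨?_, ?_⟩) <;> nlinarith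

variable [CompleteSpace E] {K : E →L[ℝ] E} {μ δ : ℝ}

/- The gap condition `δ |κ| ≤ |1 - μ κ|` says that `μ` lies at distance at least `δ` from `1/κ`
for every nonzero eigenvalue `κ` of `K`, written without division. -/

theorem isUnit_one_sub_smul_of_eigenvalue_gap (hK : IsCompactOperator K) (hδ : 0 < δ)
    (hgap : ∀ κ, HasEigenvalue (K : Module.End ℝ E) κ → δ * |κ| ≤ |1 - μ * κ|) :
    IsUnit (1 - μ • K) := by
  refine hK.isUnit_one_sub_smul_of_injective ((injective_iff_map_eq_zero _).2 fun x hx => ?_)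
  by_contra hx0
  have hfix : μ • K x = x := (sub_eq_zero.1 (by simpa using hx)).symm
  have hμ : μ ≠ 0 := by rintro rfl; simp [eq_comm, hx0] at hfix
  have hKx : K x = μ⁻¹ • x := (eq_inv_smul_iff₀ hμ).2 hfix
  have := hgap μ⁻¹ (hasEigenvalue_of_hasEigenvector ⟨mem_eigenspace_iff.2 hKx, hx0⟩)
  rw [mul_inv_cancel₀ hμ, sub_self, abs_zero] at this
  exact this.not_gt (by positivity)

theorem norm_inv_mul_le_of_eigenvalue_gap (hK : IsCompactOperator K) (hKsa : IsSelfAdjoint K)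
    (hδ : 0 < δ) (hgap : ∀ κ, HasEigenvalue (K : Module.End ℝ E) κ → δ * |κ| ≤ |1 - μ * κ|)
    (J : (E →L[ℝ] E)ˣ) (hJ : (J : E →L[ℝ] E) = 1 - μ • K) :
    ‖(↑J⁻¹ : E →L[ℝ] E) * K‖ ≤ δ⁻¹ := by
  have hJsa : IsSelfAdjoint (↑J⁻¹ : E →L[ℝ] E) := by
    rw [← Ring.inverse_unit, hJ]
    exact ((IsSelfAdjoint.one _).sub ((IsSelfAdjoint.all μ).smul hKsa)).ringInverse
  have hcomm : Commute (J : E →L[ℝ] E) K := by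
    rw [hJ]
    exact (Commute.one_left K).sub_left ((Commute.refl K).smul_left μ)
  have hCsa : IsSelfAdjoint ((↑J⁻¹ : E →L[ℝ] E) * K) :=
    (hJsa.commute_iff hKsa).1 hcomm.units_inv_left
  refine ContinuousLinearMap.norm_le_of_forall_hasEigenvalue (hK.clm_comp _) hCsa
    (inv_nonneg.2 hδ.le) fun c hc => ?_
  obtain ⟨x, hx⟩ := hc.exists_hasEigenvector
  have hrel := smul_apply_eq_smul_of_inv_mul_apply_eq_smul J hJ hx.apply_eq_smul
  rw [Real.norm_eq_abs, ← one_div, le_div_iff₀' hδ]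
  rcases eq_or_ne (1 + c * μ) 0 with h0 | h0
  · rw [h0, zero_smul, eq_comm, smul_eq_zero] at hrel
    simp [hrel.resolve_right hx.2]
  set κ := (1 + c * μ)⁻¹ * c
  have hKx : K x = κ • x := by rw [mul_smul, ← hrel, smul_smul, inv_mul_cancel₀ h0, one_smul]
  have hκ := hgap κ (hasEigenvalue_of_hasEigenvector ⟨mem_eigenspace_iff.2 hKx, hx.2⟩)
  calc δ * |c| = |1 + c * μ| * (δ * |κ|) := by
        rw [mul_left_comm, ← abs_mul, mul_inv_cancel_left₀ h0]
    _ ≤ |1 + c * μ| * |1 - μ * κ| := mul_le_mul_of_nonneg_left hκ (abs_nonneg _)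
    _ = 1 := by
        rw [← abs_mul, mul_sub, mul_one, mul_left_comm, mul_inv_cancel_left₀ h0, mul_comm μ,
          add_sub_cancel_right, abs_one]

end Real

theorem stmt4_general {M : Type*} [NormedAddCommGroup M] [InnerProductSpace ℝ M]
    [CompleteSpace M]
    (K : M →L[ℝ] M) (hcpt : IsCompactOperator (K : M → M))
    (hsym : ∀ x y : M, ⟪K x, y⟫ = ⟪x, K y⟫)
    (lam : ℕ → ℝ) (hlammono : Monotone lam)
    (hall : ∀ c : ℝ, (∃ x : M, x ≠ 0 ∧ K x = c • x) → ∃ i, c = 1 / lam i)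
    (n : ℕ) (μn μn1 : ℝ) (h1 : lam n < μn) (h2 : μn1 < lam (n + 1))
    (𝒜 : Set (M →L[ℝ] M))
    (hA : ∀ A ∈ 𝒜, (∀ x y : M, ⟪A x, y⟫ = ⟪x, A y⟫) ∧
      ∀ x : M, μn * ⟪x, x⟫ ≤ ⟪A x, x⟫ ∧ ⟪A x, x⟫ ≤ μn1 * ⟪x, x⟫) :
    ∃ N : ℝ, 0 < N ∧ ∀ A ∈ 𝒜, ∃ B : M →L[ℝ] M,
      B * (1 - K * A) = 1 ∧ (1 - K * A) * B = 1 ∧ ‖B‖ ≤ N := by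
  rcases 𝒜.eq_empty_or_nonempty with rfl | ⟨A₀, hA₀⟩
  · exact ⟨1, one_pos, by simp⟩
  rcases subsingleton_or_nontrivial M with hM | hM
  · exact ⟨1, one_pos, fun _ _ => ⟨0, Subsingleton.elim _ _, Subsingleton.elim _ _, by simp⟩⟩
  set μ := (μn + μn1) / 2 with hμ_def
  set r := (μn1 - μn) / 2 with hr_def
  set δ := min (μ - lam n) (lam (n + 1) - μ)
  have hr : 0 ≤ r := (norm_nonneg _).trans
    (ContinuousLinearMap.norm_sub_midpoint_smul_one_le (hA A₀ hA₀).1 (hA A₀ hA₀).2)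
  have hrδ : r < δ := lt_min (by rw [hμ_def, hr_def]; linarith) (by rw [hμ_def, hr_def]; linarith)
  have hδ : 0 < δ := hr.trans_lt hrδ
  have hgap : ∀ κ, HasEigenvalue (K : Module.End ℝ M) κ → δ * |κ| ≤ |1 - μ * κ| := by
    intro κ hκ
    obtain ⟨x, hx⟩ := hκ.exists_hasEigenvector
    obtain ⟨i, rfl⟩ := hall κ ⟨x, hx.2, hx.apply_eq_smul⟩
    exact mul_abs_one_div_le_abs_one_sub_mul_one_div
      (le_abs_sub_of_monotone hlammono (min_le_left _ _) (min_le_right _ _) i)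
  obtain ⟨J, hJ⟩ := isUnit_one_sub_smul_of_eigenvalue_gap hcpt hδ hgap
  have hC := norm_inv_mul_le_of_eigenvalue_gap hcpt
    (ContinuousLinearMap.isSelfAdjoint_iff_isSymmetric.2 hsym) hδ hgap J hJ
  have hq : r / δ < 1 := (div_lt_one hδ).2 hrδ
  refine ⟨(1 - r / δ)⁻¹ * ‖(↑J⁻¹ : M →L[ℝ] M)‖,
    mul_pos (inv_pos.2 (sub_pos.2 hq)) J⁻¹.norm_pos, fun A hA' => ?_⟩
  refine exists_inverse_norm_le_of_eq_mul_one_sub J (one_sub_mul_eq_mul_one_sub J hJ A) ?_ hq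
  calc ‖(↑J⁻¹ : M →L[ℝ] M) * K * (A - μ • 1)‖ ≤ ‖(↑J⁻¹ : M →L[ℝ] M) * K‖ * ‖A - μ • 1‖ :=
        norm_mul_le _ _
    _ ≤ δ⁻¹ * r := mul_le_mul hC
        (ContinuousLinearMap.norm_sub_midpoint_smul_one_le (hA A hA').1 (hA A hA').2)
        (norm_nonneg _) (inv_nonneg.2 hδ.le)
    _ = r / δ := inv_mul_eq_div δ r

/-- uniform invertibility of `I - K∘A` for a family of self-adjoint
operators `A` pinched between consecutive eigenvalues of the compact, symmetric,
positive definite operator `K`. -/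
theorem stmt4 {M : Type*} [NormedAddCommGroup M] [InnerProductSpace ℝ M]
    [CompleteSpace M]
    (K : M →L[ℝ] M) (hcpt : IsCompactOperator (K : M → M))
    (hsym : ∀ x y : M, ⟪K x, y⟫ = ⟪x, K y⟫)
    (hposdef : ∀ x : M, x ≠ 0 → 0 < ⟪K x, x⟫)
    (lam : ℕ → ℝ) (hlampos : ∀ i, 0 < lam i) (hlammono : Monotone lam)
    (heig : ∀ i, ∃ x : M, x ≠ 0 ∧ K x = (1 / lam i) • x)
    (hall : ∀ c : ℝ, (∃ x : M, x ≠ 0 ∧ K x = c • x) → ∃ i, c = 1 / lam i)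
    (n : ℕ) (μn μn1 : ℝ) (h1 : lam n < μn) (h2 : μn1 < lam (n + 1))
    (𝒜 : Set (M →L[ℝ] M))
    (hA : ∀ A ∈ 𝒜, (∀ x y : M, ⟪A x, y⟫ = ⟪x, A y⟫) ∧
      ∀ x : M, μn * ⟪x, x⟫ ≤ ⟪A x, x⟫ ∧ ⟪A x, x⟫ ≤ μn1 * ⟪x, x⟫) :
    ∃ N : ℝ, 0 < N ∧ ∀ A ∈ 𝒜, ∃ B : M →L[ℝ] M,
      B * (1 - K * A) = 1 ∧ (1 - K * A) * B = 1 ∧ ‖B‖ ≤ N :=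
  stmt4_general K hcpt hsym lam hlammono hall n μn μn1 h1 h2 𝒜 hA
end

section
/- Assume f : [0,1]×ℝ²→ℝ is continuous and bounded and its first and second partial derivatives f_x, f_y, f_xx, f_xy, f_yy with respect to the second and third variables exist and are continuous and bounded. Then the map T : C₀ → C₀ is continuously Fréchet differentiable on C₀, and its Fréchet derivative at ω ∈ C₀ is the bounded linear operator DT(ω) : C₀ → C₀ given by DT(ω)[θ](t) = θ(t) + ∫₀ᵗ ( f_x(s, Y_s(ω), Y'_s(ω))·Y_s(θ) + f_y(s, Y_s(ω), Y'_s(ω))·Y'_s(θ) ) ds for θ ∈ C₀ and t ∈ [0,1]. -/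
open MeasureTheory

/-- Projection of `ℝ` onto `[0,1]`. -/
noncomputable def pr01 (s : ℝ) : Set.Icc (0:ℝ) 1 := Set.projIcc 0 1 zero_le_one s

/-- `Y_t(ω) = -t ∫₀¹ ω(s) ds + ∫₀ᵗ ω(s) ds` for a continuous map `ω` on `[0,1]`. -/
noncomputable def Yc (ω : C(Set.Icc (0:ℝ) 1, ℝ)) (t : ℝ) : ℝ :=
  -t * (∫ s in (0:ℝ)..1, ω (pr01 s)) + ∫ s in (0:ℝ)..t, ω (pr01 s)

/-- `Y'_t(ω) = -∫₀¹ ω(s) ds + ω(t)`. -/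
noncomputable def Yc' (ω : C(Set.Icc (0:ℝ) 1, ℝ)) (t : ℝ) : ℝ :=
  -(∫ s in (0:ℝ)..1, ω (pr01 s)) + ω (pr01 t)

/-- The Banach space `C₀` of continuous functions on `[0,1]` vanishing at `0`,
as a subspace of `C([0,1],ℝ)` with the supremum norm. -/
def C0 : Submodule ℝ C(Set.Icc (0:ℝ) 1, ℝ) where
  carrier := {ω | ω ⟨0, by norm_num⟩ = 0}
  add_mem' := by
    intro a b ha hb
    simp only [Set.mem_setOf_eq, ContinuousMap.add_apply] at *
    rw [ha, hb]; ring
  zero_mem' := by simp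
  smul_mem' := by
    intro c a ha
    simp only [Set.mem_setOf_eq, ContinuousMap.smul_apply, smul_eq_mul] at *
    rw [ha]; ring

/-- `g : [0,1]×ℝ²→ℝ` is continuous and bounded. -/
def ContBdd3 (g : ℝ → ℝ → ℝ → ℝ) : Prop :=
  ContinuousOn (fun p : ℝ × ℝ × ℝ => g p.1 p.2.1 p.2.2)
    (Set.Icc 0 1 ×ˢ (Set.univ : Set (ℝ × ℝ))) ∧
  ∃ C : ℝ, ∀ t ∈ Set.Icc (0:ℝ) 1, ∀ x y : ℝ, |g t x y| ≤ C

/-!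
Both `T` and the claimed derivative make sense on all of `C([0,1])`:
`T ω = ω + V (N (Y ω, Y' ω))`, where `V G t = ∫₀ᵗ G` is the Volterra operator, `Y` and `Y'`
are bounded linear operators and `N (u, v) s = f s (u s) (v s)` is the superposition
(Nemytskii) operator of `f`. Bounded second derivatives of `f` give a second-order Taylor
estimate, uniform in `s`, so `N` is Fréchet differentiable with derivative
`(a, b) ↦ f_x(·, u, v) a + f_y(·, u, v) b` and remainder `O(‖(a, b)‖²)`. This derivative
depends continuously on `(u, v)` because `N` is continuous for the compact-open (here the
uniform) topology. The chain rule gives the derivative of `T`; since `V` takes values in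
`C₀`, both `T` and its derivative preserve `C₀`, and restrict to it.
-/

open Set Asymptotics ContinuousLinearMap

theorem abs_sub_le_of_hasDerivAt {g g' : ℝ → ℝ} {C : ℝ}
    (hd : ∀ u, HasDerivAt g (g' u) u) (hB : ∀ u, |g' u| ≤ C) (x y : ℝ) :
    |g y - g x| ≤ C * |y - x| := by
  simpa only [Real.norm_eq_abs] using Convex.norm_image_sub_le_of_norm_hasDerivWithin_le
    (fun u _ => (hd u).hasDerivWithinAt) (fun u _ => hB u) convex_univ trivial trivial

theorem abs_sub_sub_mul_le_of_hasDerivAt {g g' g'' : ℝ → ℝ} {C : ℝ}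
    (hd : ∀ u, HasDerivAt g (g' u) u) (hd2 : ∀ u, HasDerivAt g' (g'' u) u)
    (hB : ∀ u, |g'' u| ≤ C) (x a : ℝ) :
    |g (x + a) - g x - g' x * a| ≤ C * a ^ 2 := by
  -- mean value theorem for `u ↦ g u - g' x * u`, whose derivative is `≤ C |a|` on `[x, x + a]`
  have hslope : ∀ u ∈ uIcc x (x + a), ‖g' u - g' x‖ ≤ C * |a| := fun u hu => by
    have hux : |u - x| ≤ |a| := by
      simpa [Real.dist_eq] using Real.dist_le_of_mem_uIcc hu left_mem_uIcc
    exact (abs_sub_le_of_hasDerivAt hd2 hB x u).trans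
      (mul_le_mul_of_nonneg_left hux ((abs_nonneg _).trans (hB x)))
  have key := Convex.norm_image_sub_le_of_norm_hasDerivWithin_le
    (f := fun u => g u - g' x * u) (fun u _ =>
      ((hd u).sub ((hasDerivAt_id u).const_mul (g' x))).hasDerivWithinAt.congr_deriv
        (by simp)) hslope (convex_uIcc x (x + a)) left_mem_uIcc right_mem_uIcc
  calc |g (x + a) - g x - g' x * a|
      = ‖(g (x + a) - g' x * (x + a)) - (g x - g' x * x)‖ := by
        rw [Real.norm_eq_abs]; ring_nf
    _ ≤ C * |a| * ‖x + a - x‖ := key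
    _ = C * a ^ 2 := by simp [mul_assoc, ← sq, sq_abs]

theorem abs_taylor_remainder_le_of_hasDerivAt₂
    {F Fx Fy Fxx Fxy Fyy : ℝ → ℝ → ℝ} {Cxx Cxy Cyy r : ℝ}
    (hdx : ∀ x y, HasDerivAt (F · y) (Fx x y) x) (hdy : ∀ x y, HasDerivAt (F x ·) (Fy x y) y)
    (hdxx : ∀ x y, HasDerivAt (Fx · y) (Fxx x y) x)
    (hdxy : ∀ x y, HasDerivAt (Fx x ·) (Fxy x y) y)
    (hdyy : ∀ x y, HasDerivAt (Fy x ·) (Fyy x y) y)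
    (hxx : ∀ x y, |Fxx x y| ≤ Cxx) (hxy : ∀ x y, |Fxy x y| ≤ Cxy) (hyy : ∀ x y, |Fyy x y| ≤ Cyy)
    {x y a b : ℝ} (ha : |a| ≤ r) (hb : |b| ≤ r) :
    |F (x + a) (y + b) - F x y - (Fx x y * a + Fy x y * b)| ≤ (Cxx + Cxy + Cyy) * r ^ 2 := by
  have hCxx : 0 ≤ Cxx := (abs_nonneg _).trans (hxx 0 0)
  have hCxy : 0 ≤ Cxy := (abs_nonneg _).trans (hxy 0 0)
  have hCyy : 0 ≤ Cyy := (abs_nonneg _).trans (hyy 0 0)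
  -- move first in `x` at height `y + b`, then in `y`
  have Ex :=
    abs_sub_sub_mul_le_of_hasDerivAt (hdx · (y + b)) (hdxx · (y + b)) (hxx · (y + b)) x a
  have Exy := abs_sub_le_of_hasDerivAt (hdxy x) (hxy x) y (y + b)
  have Ey := abs_sub_sub_mul_le_of_hasDerivAt (hdy x) (hdyy x) (hyy x) y b
  rw [add_sub_cancel_left] at Exy
  have ha2 : a ^ 2 ≤ r ^ 2 := sq_le_sq' (abs_le.1 ha).1 (abs_le.1 ha).2
  have hb2 : b ^ 2 ≤ r ^ 2 := sq_le_sq' (abs_le.1 hb).1 (abs_le.1 hb).2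
  have hab : |b| * |a| ≤ r ^ 2 := by
    rw [sq]; exact mul_le_mul hb ha (abs_nonneg a) ((abs_nonneg b).trans hb)
  calc |F (x + a) (y + b) - F x y - (Fx x y * a + Fy x y * b)|
      = |(F (x + a) (y + b) - F x (y + b) - Fx x (y + b) * a)
          + (Fx x (y + b) - Fx x y) * a + (F x (y + b) - F x y - Fy x y * b)| := by ring_nf
    _ ≤ Cxx * a ^ 2 + Cxy * |b| * |a| + Cyy * b ^ 2 := by
      refine (abs_add_three _ _ _).trans (add_le_add_three Ex ?_ Ey)
      rw [abs_mul]; exact mul_le_mul_of_nonneg_right Exy (abs_nonneg a)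
    _ ≤ (Cxx + Cxy + Cyy) * r ^ 2 := by
      rw [mul_assoc Cxy]
      nlinarith [mul_le_mul_of_nonneg_left ha2 hCxx, mul_le_mul_of_nonneg_left hab hCxy,
        mul_le_mul_of_nonneg_left hb2 hCyy]

section Calculus

variable {E F : Type*} [NormedAddCommGroup E] [NormedSpace ℝ E]
  [NormedAddCommGroup F] [NormedSpace ℝ F]

theorem hasFDerivAt_of_norm_sub_le_sq {f : E → F} {f' : E →L[ℝ] F} {x : E} {C : ℝ}
    (h : ∀ v, ‖f (x + v) - f x - f' v‖ ≤ C * ‖v‖ ^ 2) : HasFDerivAt f f' x := by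
  rw [hasFDerivAt_iff_isLittleO_nhds_zero]
  exact (IsBigO.of_bound C (Filter.Eventually.of_forall fun v => by
    simpa [abs_of_nonneg (sq_nonneg ‖v‖)] using h v)).trans_isLittleO
      (isLittleO_norm_pow_id one_lt_two)

theorem HasFDerivAt.of_subtype_comp {p : Submodule ℝ F} {f : E → p} {f' : E →L[ℝ] p} {x : E}
    (h : HasFDerivAt (fun y => (f y : F)) (p.subtypeL ∘L f') x) : HasFDerivAt f f' x := by
  rw [hasFDerivAt_iff_isLittleO_nhds_zero] at h ⊢
  exact isLittleO_norm_left.1 h.norm_left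

theorem HasFDerivAt.restrict_submodule {p : Submodule ℝ E} {f : p → p} {g : E → E}
    {A : E →L[ℝ] E} (hfg : ∀ y, (f y : E) = g y) (hA : ∀ y ∈ p, A y ∈ p) {x : p}
    (hg : HasFDerivAt g A x) :
    HasFDerivAt f (A.restrict hA) x := by
  refine HasFDerivAt.of_subtype_comp ?_
  simp only [hfg]
  exact hg.comp x p.subtypeL.hasFDerivAt

theorem Continuous.clm_restrict {X : Type*} [TopologicalSpace X] {p : Submodule ℝ E}
    {A : X → E →L[ℝ] E} (hA : Continuous A) (hp : ∀ z, ∀ y ∈ p, A z y ∈ p) :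
    Continuous fun z => (A z).restrict (hp z) :=
  (LinearIsometry.postcomp p.subtypeₗᵢ).isometry.comp_continuous_iff.1
    (hA.clm_comp continuous_const)

end Calculus

local notation "I" => Set.Icc (0:ℝ) 1

abbrev ContinuousOnStrip (g : ℝ → ℝ → ℝ → ℝ) : Prop :=
  ContinuousOn (fun p : ℝ × ℝ × ℝ => g p.1 p.2.1 p.2.2) (I ×ˢ univ)

theorem continuous_comp_pr01 (G : C(I, ℝ)) : Continuous fun s => G (pr01 s) :=
  G.continuous.comp (continuous_projIcc (h := zero_le_one))

noncomputable def volterra : C(I, ℝ) →L[ℝ] C(I, ℝ) :=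
  LinearMap.mkContinuous
    { toFun := fun G => ⟨fun t => ∫ s in (0:ℝ)..t, G (pr01 s),
        (intervalIntegral.continuous_primitive
          (fun a b => (continuous_comp_pr01 G).intervalIntegrable a b) 0).comp
          continuous_subtype_val⟩
      map_add' := fun G H => ContinuousMap.ext fun t =>
        intervalIntegral.integral_add ((continuous_comp_pr01 G).intervalIntegrable _ _)
          ((continuous_comp_pr01 H).intervalIntegrable _ _)
      map_smul' := fun c G => ContinuousMap.ext fun t => intervalIntegral.integral_smul c _ }
    1 fun G => by
      refine (ContinuousMap.norm_le_of_nonempty _).2 fun t => ?_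
      calc ‖∫ s in (0:ℝ)..t, G (pr01 s)‖ ≤ ‖G‖ * |(t : ℝ) - 0| :=
            intervalIntegral.norm_integral_le_of_norm_le_const fun s _ => G.norm_coe_le_norm _
        _ ≤ 1 * ‖G‖ := by
            rw [sub_zero, abs_of_nonneg t.2.1, mul_comm]
            exact mul_le_mul_of_nonneg_right t.2.2 (norm_nonneg G)

theorem volterra_apply (G : C(I, ℝ)) (t : I) : volterra G t = ∫ s in (0:ℝ)..t, G (pr01 s) :=
  rfl

theorem volterra_apply_eq_integral {G : C(I, ℝ)} {g : ℝ → ℝ} (h : ∀ s : I, G s = g s)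
    (t : I) : volterra G t = ∫ s in (0:ℝ)..t, g s := by
  refine intervalIntegral.integral_congr fun s hs => ?_
  have hsI : s ∈ I := by
    rw [uIcc_of_le t.2.1] at hs
    exact ⟨hs.1, hs.2.trans t.2.2⟩
  simp only [pr01, projIcc_of_mem zero_le_one hsI, h]

theorem volterra_mem_C0 (G : C(I, ℝ)) : volterra G ∈ C0 :=
  intervalIntegral.integral_same

noncomputable def yCLM : C(I, ℝ) →L[ℝ] C(I, ℝ) :=
  volterra - (ContinuousMap.evalCLM ℝ (1 : I) ∘L volterra).smulRight
    ((ContinuousMap.id ℝ).restrict I)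

noncomputable def yCLM' : C(I, ℝ) →L[ℝ] C(I, ℝ) :=
  ContinuousLinearMap.id ℝ _ - (ContinuousMap.evalCLM ℝ (1 : I) ∘L volterra).smulRight 1

theorem yCLM_apply (ω : C(I, ℝ)) (t : I) : yCLM ω t = Yc ω t := by
  simp only [yCLM, Yc, sub_apply, smulRight_apply, comp_apply, ContinuousMap.evalCLM_apply,
    volterra_apply, Icc.coe_one, ContinuousMap.sub_apply, ContinuousMap.coe_smul,
    ContinuousMap.coe_restrict, ContinuousMap.coe_id, domRestrict_id, Pi.smul_apply, smul_eq_mul]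
  ring

theorem yCLM'_apply (ω : C(I, ℝ)) (t : I) : yCLM' ω t = Yc' ω t := by
  simp only [yCLM', Yc', sub_apply, id_apply, smulRight_apply, comp_apply,
    ContinuousMap.evalCLM_apply, volterra_apply, pr01, Icc.coe_one, ContinuousMap.sub_apply,
    ContinuousMap.coe_smul, ContinuousMap.coe_one, Pi.smul_apply, Pi.one_apply, smul_eq_mul,
    mul_one, projIcc_val]
  ring

section Nemytskii

variable {g gx gy : ℝ → ℝ → ℝ → ℝ}

noncomputable def nemytskii (hg : ContinuousOnStrip g) (u : C(I, ℝ) × C(I, ℝ)) : C(I, ℝ) :=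
  ⟨fun s => g s (u.1 s) (u.2 s),
    hg.comp_continuous (f := fun s : I => ((s : ℝ), u.1 s, u.2 s)) (by fun_prop)
      fun s => ⟨s.2, trivial⟩⟩

@[simp]
theorem nemytskii_apply (hg : ContinuousOnStrip g) (u : C(I, ℝ) × C(I, ℝ)) (s : I) :
    nemytskii hg u s = g s (u.1 s) (u.2 s) :=
  rfl

theorem continuous_nemytskii (hg : ContinuousOnStrip g) : Continuous (nemytskii hg) :=
  ContinuousMap.continuous_of_continuous_uncurry _ <| hg.comp_continuous
    (f := fun q : (C(I, ℝ) × C(I, ℝ)) × I => ((q.2 : ℝ), q.1.1 q.2, q.1.2 q.2)) (by fun_prop)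
    fun q => ⟨q.2.2, trivial⟩

noncomputable def nemytskiiDeriv (hgx : ContinuousOnStrip gx) (hgy : ContinuousOnStrip gy)
    (u : C(I, ℝ) × C(I, ℝ)) : C(I, ℝ) × C(I, ℝ) →L[ℝ] C(I, ℝ) :=
  mul ℝ _ (nemytskii hgx u) ∘L fst ℝ _ _ + mul ℝ _ (nemytskii hgy u) ∘L snd ℝ _ _

theorem continuous_nemytskiiDeriv (hgx : ContinuousOnStrip gx) (hgy : ContinuousOnStrip gy) :
    Continuous (nemytskiiDeriv hgx hgy) :=
  (((mul ℝ _).continuous.comp (continuous_nemytskii hgx)).clm_comp continuous_const).add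
    (((mul ℝ _).continuous.comp (continuous_nemytskii hgy)).clm_comp continuous_const)

theorem hasFDerivAt_nemytskii {f fx fy fxx fxy fyy : ℝ → ℝ → ℝ → ℝ} {Cxx Cxy Cyy : ℝ}
    (hf : ContinuousOnStrip f) (hfx : ContinuousOnStrip fx) (hfy : ContinuousOnStrip fy)
    (hdx : ∀ t x y : ℝ, HasDerivAt (fun z => f t z y) (fx t x y) x)
    (hdy : ∀ t x y : ℝ, HasDerivAt (fun z => f t x z) (fy t x y) y)
    (hdxx : ∀ t x y : ℝ, HasDerivAt (fun z => fx t z y) (fxx t x y) x)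
    (hdxy : ∀ t x y : ℝ, HasDerivAt (fun z => fx t x z) (fxy t x y) y)
    (hdyy : ∀ t x y : ℝ, HasDerivAt (fun z => fy t x z) (fyy t x y) y)
    (hxx : ∀ t ∈ I, ∀ x y : ℝ, |fxx t x y| ≤ Cxx) (hxy : ∀ t ∈ I, ∀ x y : ℝ, |fxy t x y| ≤ Cxy)
    (hyy : ∀ t ∈ I, ∀ x y : ℝ, |fyy t x y| ≤ Cyy) (u : C(I, ℝ) × C(I, ℝ)) :
    HasFDerivAt (nemytskii hf) (nemytskiiDeriv hfx hfy u) u := by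
  refine hasFDerivAt_of_norm_sub_le_sq (C := Cxx + Cxy + Cyy) fun v => ?_
  refine (ContinuousMap.norm_le_of_nonempty _).2 fun s => ?_
  exact abs_taylor_remainder_le_of_hasDerivAt₂ (x := u.1 s) (y := u.2 s)
    (hdx s) (hdy s) (hdxx s) (hdxy s) (hdyy s) (hxx s s.2) (hxy s s.2) (hyy s s.2)
    ((v.1.norm_coe_le_norm s).trans (norm_fst_le v))
    ((v.2.norm_coe_le_norm s).trans (norm_snd_le v))

end Nemytskii

section Operator

variable {f fx fy : ℝ → ℝ → ℝ → ℝ}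

noncomputable def opT (hf : ContinuousOnStrip f) (ω : C(I, ℝ)) : C(I, ℝ) :=
  ω + volterra (nemytskii hf (yCLM.prod yCLM' ω))

noncomputable def opDT (hfx : ContinuousOnStrip fx) (hfy : ContinuousOnStrip fy)
    (ω : C(I, ℝ)) : C(I, ℝ) →L[ℝ] C(I, ℝ) :=
  ContinuousLinearMap.id ℝ _ + volterra ∘L nemytskiiDeriv hfx hfy (yCLM.prod yCLM' ω) ∘L
    yCLM.prod yCLM'

theorem opT_apply (hf : ContinuousOnStrip f) (ω : C(I, ℝ)) (t : I) :
    opT hf ω t = ω t + ∫ s in (0:ℝ)..t, f s (Yc ω s) (Yc' ω s) := by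
  simp only [opT, ContinuousMap.add_apply]
  congr 1
  exact volterra_apply_eq_integral (fun s => by simp [yCLM_apply, yCLM'_apply]) t

theorem opDT_apply (hfx : ContinuousOnStrip fx) (hfy : ContinuousOnStrip fy)
    (ω θ : C(I, ℝ)) (t : I) :
    opDT hfx hfy ω θ t = θ t + ∫ s in (0:ℝ)..t,
      (fx s (Yc ω s) (Yc' ω s) * Yc θ s + fy s (Yc ω s) (Yc' ω s) * Yc' θ s) := by
  simp only [opDT, add_apply, coe_id', id_eq, coe_comp, Function.comp_apply,
    ContinuousMap.add_apply]
  congr 1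
  exact volterra_apply_eq_integral
    (fun s => by simp [nemytskiiDeriv, yCLM_apply, yCLM'_apply]) t

theorem opDT_mem_C0 (hfx : ContinuousOnStrip fx) (hfy : ContinuousOnStrip fy)
    (ω : C(I, ℝ)) : ∀ θ ∈ C0, opDT hfx hfy ω θ ∈ C0 :=
  fun _ hθ => C0.add_mem hθ (volterra_mem_C0 _)

theorem continuous_opDT (hfx : ContinuousOnStrip fx) (hfy : ContinuousOnStrip fy) :
    Continuous (opDT hfx hfy) :=
  continuous_const.add (continuous_const.clm_comp
    (((continuous_nemytskiiDeriv hfx hfy).comp (yCLM.prod yCLM').continuous).clm_comp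
      continuous_const))

theorem hasFDerivAt_opT {fxx fxy fyy : ℝ → ℝ → ℝ → ℝ} {Cxx Cxy Cyy : ℝ}
    (hf : ContinuousOnStrip f) (hfx : ContinuousOnStrip fx) (hfy : ContinuousOnStrip fy)
    (hdx : ∀ t x y : ℝ, HasDerivAt (fun z => f t z y) (fx t x y) x)
    (hdy : ∀ t x y : ℝ, HasDerivAt (fun z => f t x z) (fy t x y) y)
    (hdxx : ∀ t x y : ℝ, HasDerivAt (fun z => fx t z y) (fxx t x y) x)
    (hdxy : ∀ t x y : ℝ, HasDerivAt (fun z => fx t x z) (fxy t x y) y)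
    (hdyy : ∀ t x y : ℝ, HasDerivAt (fun z => fy t x z) (fyy t x y) y)
    (hxx : ∀ t ∈ I, ∀ x y : ℝ, |fxx t x y| ≤ Cxx) (hxy : ∀ t ∈ I, ∀ x y : ℝ, |fxy t x y| ≤ Cxy)
    (hyy : ∀ t ∈ I, ∀ x y : ℝ, |fyy t x y| ≤ Cyy) (ω : C(I, ℝ)) :
    HasFDerivAt (opT hf) (opDT hfx hfy ω) ω :=
  (hasFDerivAt_id ω).add <| volterra.hasFDerivAt.comp ω <|
    (hasFDerivAt_nemytskii hf hfx hfy hdx hdy hdxx hdxy hdyy hxx hxy hyy _).comp ω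
      (yCLM.prod yCLM').hasFDerivAt

end Operator

/-- the map `T` is continuously Fréchet differentiable on `C₀`, with
the stated derivative. -/
theorem stmt10 (f fx fy fxx fxy fyy : ℝ → ℝ → ℝ → ℝ)
    (hf : ContBdd3 f) (hfx : ContBdd3 fx) (hfy : ContBdd3 fy)
    (hfxx : ContBdd3 fxx) (hfxy : ContBdd3 fxy) (hfyy : ContBdd3 fyy)
    (hdx : ∀ t x y : ℝ, HasDerivAt (fun z => f t z y) (fx t x y) x)
    (hdy : ∀ t x y : ℝ, HasDerivAt (fun z => f t x z) (fy t x y) y)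
    (hdxx : ∀ t x y : ℝ, HasDerivAt (fun z => fx t z y) (fxx t x y) x)
    (hdxy : ∀ t x y : ℝ, HasDerivAt (fun z => fx t x z) (fxy t x y) y)
    (hdyy : ∀ t x y : ℝ, HasDerivAt (fun z => fy t x z) (fyy t x y) y)
    (T : C0 → C0)
    (hT : ∀ ω : C0, ∀ t : Set.Icc (0:ℝ) 1,
      (T ω : C(Set.Icc (0:ℝ) 1, ℝ)) t
        = (ω : C(Set.Icc (0:ℝ) 1, ℝ)) t
          + ∫ s in (0:ℝ)..(t:ℝ),
              f s (Yc (ω : C(Set.Icc (0:ℝ) 1, ℝ)) s)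
                (Yc' (ω : C(Set.Icc (0:ℝ) 1, ℝ)) s)) :
    ∃ D : C0 → (C0 →L[ℝ] C0),
      (∀ ω : C0, HasFDerivAt T (D ω) ω) ∧
      Continuous D ∧
      ∀ (ω θ : C0) (t : Set.Icc (0:ℝ) 1),
        (D ω θ : C(Set.Icc (0:ℝ) 1, ℝ)) t
          = (θ : C(Set.Icc (0:ℝ) 1, ℝ)) t
            + ∫ s in (0:ℝ)..(t:ℝ),
                (fx s (Yc (ω : C(Set.Icc (0:ℝ) 1, ℝ)) s)
                    (Yc' (ω : C(Set.Icc (0:ℝ) 1, ℝ)) s)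
                  * Yc (θ : C(Set.Icc (0:ℝ) 1, ℝ)) s
                + fy s (Yc (ω : C(Set.Icc (0:ℝ) 1, ℝ)) s)
                    (Yc' (ω : C(Set.Icc (0:ℝ) 1, ℝ)) s)
                  * Yc' (θ : C(Set.Icc (0:ℝ) 1, ℝ)) s) := by
  obtain ⟨hf, -⟩ := hf
  obtain ⟨hfx, -⟩ := hfx
  obtain ⟨hfy, -⟩ := hfy
  obtain ⟨-, Cxx, hxx⟩ := hfxx
  obtain ⟨-, Cxy, hxy⟩ := hfxy
  obtain ⟨-, Cyy, hyy⟩ := hfyy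
  have hT_eq : ∀ ω : C0, (T ω : C(I, ℝ)) = opT hf ω := fun ω =>
    ContinuousMap.ext fun t => by rw [hT, opT_apply]
  refine ⟨fun ω => (opDT hfx hfy ω).restrict (opDT_mem_C0 hfx hfy ω), fun ω => ?_,
    ((continuous_opDT hfx hfy).comp continuous_subtype_val).clm_restrict _,
    fun ω θ t => opDT_apply hfx hfy ω θ t⟩
  exact HasFDerivAt.restrict_submodule hT_eq _
    (hasFDerivAt_opT hf hfx hfy hdx hdy hdxx hdxy hdyy hxx hxy hyy ω)
end

section
/- Let f : [0,1]×ℝ²→ℝ be continuous, let Γ ⊆ C₀, and let X : Γ → C¹₀ be a map such that for every ω ∈ Γ the function X(ω) satisfies X(ω)'(t) + ∫₀ᵗ f(s, X(ω)(s), X(ω)'(s)) ds = X(ω)'(0) + ω(t) for all t ∈ [0,1]. Define S : Γ → C₀ by S_t(ω) = ω(t) - ∫₀ᵗ f(s, X(ω)(s), X(ω)'(s)) ds. Then T(S(ω)) = ω for every ω ∈ Γ; in particular S is injective on Γ and T maps S(Γ) onto Γ. -/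
/-! If `u ∈ C¹₀` and `ω = u' + c` on `[0,1]` for a constant `c`, then `∫₀ᵗ ω = u(t) + c t` and
`∫₀¹ ω = c`, so `Y(ω) = u` and `Y'(ω) = u'`: the map `Y` undoes differentiation modulo
constants. The equation for `X(ω)` says exactly that `S(ω) = X(ω)' - X(ω)'(0)`, hence
`Y(S ω) = X(ω)`, `Y'(S ω) = X(ω)'`, and the integral term of `T` cancels the one in `S`. -/

open MeasureTheory

open Set

lemma coe_pr01_of_mem {s : ℝ} (hs : s ∈ Icc (0:ℝ) 1) : (pr01 s : ℝ) = s := by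
  simp [pr01, projIcc_of_mem zero_le_one hs]

lemma uIcc_zero_subset_Icc {t : ℝ} (ht : t ∈ Icc (0:ℝ) 1) : uIcc 0 t ⊆ Icc 0 1 := by
  rw [uIcc_of_le ht.1]
  exact Icc_subset_Icc le_rfl ht.2

lemma intervalIntegral.integral_eq_sub_of_hasDerivWithinAt_Icc {u u' : ℝ → ℝ} {a b t : ℝ}
    (hu : ∀ x ∈ Icc a b, HasDerivWithinAt u (u' x) (Icc a b) x)
    (hu' : ContinuousOn u' (Icc a b)) (ht : t ∈ Icc a b) :
    ∫ x in a..t, u' x = u t - u a := by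
  have hsub : Icc a t ⊆ Icc a b := Icc_subset_Icc le_rfl ht.2
  refine integral_eq_sub_of_hasDeriv_right_of_le ht.1
    (fun x hx => (hu x (hsub hx)).continuousWithinAt.mono hsub) (fun x hx => ?_)
    ((hu'.mono hsub).intervalIntegrable_of_Icc ht.1)
  exact ((hu x (hsub (Ioo_subset_Icc_self hx))).hasDerivAt
    (Icc_mem_nhds hx.1 (hx.2.trans_le ht.2))).hasDerivWithinAt

section DerivAddConst

variable {u u' : ℝ → ℝ} {ω : C(Icc (0:ℝ) 1, ℝ)} {c : ℝ}
  (hu : ∀ t ∈ Icc (0:ℝ) 1, HasDerivWithinAt u (u' t) (Icc 0 1) t)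
  (hu' : ContinuousOn u' (Icc 0 1)) (hu0 : u 0 = 0)
  (hω : ∀ s ∈ Icc (0:ℝ) 1, ω (pr01 s) = u' s + c)
include hu hu' hu0 hω

lemma integral_comp_pr01_eq_of_eq_deriv_add_const {t : ℝ} (ht : t ∈ Icc (0:ℝ) 1) :
    ∫ s in (0:ℝ)..t, ω (pr01 s) = u t + c * t := by
  have hsub := uIcc_zero_subset_Icc ht
  rw [intervalIntegral.integral_congr (fun s hs => hω s (hsub hs)),
    intervalIntegral.integral_add ((hu'.mono hsub).intervalIntegrable) intervalIntegrable_const,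
    intervalIntegral.integral_eq_sub_of_hasDerivWithinAt_Icc hu hu' ht, hu0,
    intervalIntegral.integral_const, smul_eq_mul]
  ring

lemma Yc_eq_of_eq_deriv_add_const (hu1 : u 1 = 0) {t : ℝ} (ht : t ∈ Icc (0:ℝ) 1) :
    Yc ω t = u t := by
  rw [Yc, integral_comp_pr01_eq_of_eq_deriv_add_const hu hu' hu0 hω ht,
    integral_comp_pr01_eq_of_eq_deriv_add_const hu hu' hu0 hω ⟨zero_le_one, le_rfl⟩, hu1]
  ring

lemma Yc'_eq_of_eq_deriv_add_const (hu1 : u 1 = 0) {t : ℝ} (ht : t ∈ Icc (0:ℝ) 1) :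
    Yc' ω t = u' t := by
  rw [Yc', integral_comp_pr01_eq_of_eq_deriv_add_const hu hu' hu0 hω ⟨zero_le_one, le_rfl⟩,
    hω t ht, hu1]
  ring

end DerivAddConst

/-- `T ∘ S = I` on `Γ`; in particular `S` is injective on `Γ` and
`T` maps `S(Γ)` onto `Γ`. -/
theorem stmt12 (f : ℝ → ℝ → ℝ → ℝ)
    (Γ : Set C(Set.Icc (0:ℝ) 1, ℝ))
    (X X' : C(Set.Icc (0:ℝ) 1, ℝ) → ℝ → ℝ)
    (hX : ∀ ω ∈ Γ,
      (∀ t ∈ Set.Icc (0:ℝ) 1, HasDerivWithinAt (X ω) (X' ω t) (Set.Icc 0 1) t) ∧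
      ContinuousOn (X' ω) (Set.Icc 0 1) ∧ X ω 0 = 0 ∧ X ω 1 = 0 ∧
      ∀ t ∈ Set.Icc (0:ℝ) 1,
        X' ω t + ∫ s in (0:ℝ)..t, f s (X ω s) (X' ω s) = X' ω 0 + ω (pr01 t))
    (S : C(Set.Icc (0:ℝ) 1, ℝ) → C(Set.Icc (0:ℝ) 1, ℝ))
    (hS : ∀ ω ∈ Γ, ∀ t : Set.Icc (0:ℝ) 1,
      S ω t = ω t - ∫ s in (0:ℝ)..(t:ℝ), f s (X ω s) (X' ω s))
    (T : C(Set.Icc (0:ℝ) 1, ℝ) → C(Set.Icc (0:ℝ) 1, ℝ))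
    (hT : ∀ ω : C(Set.Icc (0:ℝ) 1, ℝ), ∀ t : Set.Icc (0:ℝ) 1,
      T ω t = ω t + ∫ s in (0:ℝ)..(t:ℝ), f s (Yc ω s) (Yc' ω s)) :
    (∀ ω ∈ Γ, T (S ω) = ω) ∧ Set.InjOn S Γ ∧ Set.SurjOn T (S '' Γ) Γ := by
  have hTS : LeftInvOn T S Γ := by
    intro ω hω
    obtain ⟨hXd, hX'c, hX0, hX1, hXeq⟩ := hX ω hω
    have hSω : ∀ s ∈ Icc (0:ℝ) 1, S ω (pr01 s) = X' ω s + -X' ω 0 := by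
      intro s hs
      rw [hS ω hω, coe_pr01_of_mem hs]
      linarith [hXeq s hs]
    ext t
    rw [hT, hS ω hω]
    suffices ∫ s in (0:ℝ)..(t:ℝ), f s (Yc (S ω) s) (Yc' (S ω) s) =
        ∫ s in (0:ℝ)..(t:ℝ), f s (X ω s) (X' ω s) by rw [this]; ring
    refine intervalIntegral.integral_congr fun s hs => ?_
    have hs' := uIcc_zero_subset_Icc t.2 hs
    rw [Yc_eq_of_eq_deriv_add_const hXd hX'c hX0 hSω hX1 hs',
      Yc'_eq_of_eq_deriv_add_const hXd hX'c hX0 hSω hX1 hs']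
  exact ⟨hTS, hTS.injOn, hTS.surjOn (mapsTo_image S Γ)⟩
end

section
/- Assume f : [0,1]×ℝ²→ℝ is continuous and bounded and its first and second partial derivatives f_x, f_y, f_xx, f_xy, f_yy with respect to the second and third variables exist and are continuous and bounded. Fix ω ∈ C₀ and h ∈ L²(0,1), and set h̃(t) = ∫₀ᵗ h(s) ds. Then, with convergence in L²(0,1), lim_{r→0} (1/r)·[ f(·, Y_·(ω + r h̃), Y'_·(ω + r h̃)) - f(·, Y_·(ω), Y'_·(ω)) ] = f_x(·, Y_·(ω), Y'_·(ω))·Y_·(h̃) + f_y(·, Y_·(ω), Y'_·(ω))·Y'_·(h̃). -/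
open MeasureTheory Filter

/-- `Y'_t(ω) = -∫₀¹ ω(s) ds + ω(t)`. -/
noncomputable def Yw' (ω : ℝ → ℝ) (t : ℝ) : ℝ :=
  -(∫ s in (0:ℝ)..1, ω s) + ω t

open Set Topology

/-! Since `Y` and `Y'` are linear in `ω`, the perturbed arguments are exactly
`Y(ω) + r Y(h̃)` and `Y'(ω) + r Y'(h̃)`. A second-order Taylor bound for `f(t, ·, ·)`,
uniform in `t` because the second partials are bounded, makes the integrand of the
difference quotient minus its linearisation `O(r)` uniformly on `(0,1)`, as `Y(h̃)` and
`Y'(h̃)` are continuous, hence bounded, there. So its `L²(0,1)` norm squared is `O(r²)`. -/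

lemma abs_sub_le_mul_abs_sub_of_hasDerivAt {g g' : ℝ → ℝ} {M : ℝ}
    (hd : ∀ x, HasDerivAt g (g' x) x) (hb : ∀ x, |g' x| ≤ M) (a b : ℝ) :
    |g b - g a| ≤ M * |b - a| :=
  convex_univ.norm_image_sub_le_of_norm_hasDerivWithin_le
    (fun x _ => (hd x).hasDerivWithinAt) (fun x _ => hb x) (mem_univ a) (mem_univ b)

lemma abs_sub_sub_deriv_mul_le {g g' g'' : ℝ → ℝ} {M : ℝ}
    (hd : ∀ x, HasDerivAt g (g' x) x) (hd' : ∀ x, HasDerivAt g' (g'' x) x)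
    (hb : ∀ x, |g'' x| ≤ M) (a b : ℝ) :
    |g b - g a - g' a * (b - a)| ≤ M * (b - a) ^ 2 := by
  have hM : 0 ≤ M := (abs_nonneg _).trans (hb a)
  have hφ : ∀ z, HasDerivAt (fun z => g z - g' a * z) (g' z - g' a) z := fun z => by
    simpa using (hd z).fun_sub ((hasDerivAt_id' z).const_mul (g' a))
  have hφ' : ∀ z ∈ uIcc a b, ‖g' z - g' a‖ ≤ M * |b - a| := fun z hz =>
    (abs_sub_le_mul_abs_sub_of_hasDerivAt hd' hb a z).trans
      (mul_le_mul_of_nonneg_left (abs_sub_left_of_mem_uIcc hz) hM)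
  have key := (convex_uIcc a b).norm_image_sub_le_of_norm_hasDerivWithin_le
    (fun z _ => (hφ z).hasDerivWithinAt) hφ' left_mem_uIcc right_mem_uIcc
  calc |g b - g a - g' a * (b - a)| = ‖g b - g' a * b - (g a - g' a * a)‖ := by
        rw [Real.norm_eq_abs]; ring_nf
    _ ≤ M * |b - a| * ‖b - a‖ := key
    _ = M * (b - a) ^ 2 := by rw [Real.norm_eq_abs, mul_assoc, ← sq, sq_abs]

lemma abs_taylor_remainder₂_le {F Fx Fy Fxx Fxy Fyy : ℝ → ℝ → ℝ} {M : ℝ}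
    (hdx : ∀ x y, HasDerivAt (fun z => F z y) (Fx x y) x)
    (hdy : ∀ x y, HasDerivAt (fun z => F x z) (Fy x y) y)
    (hdxx : ∀ x y, HasDerivAt (fun z => Fx z y) (Fxx x y) x)
    (hdxy : ∀ x y, HasDerivAt (fun z => Fx x z) (Fxy x y) y)
    (hdyy : ∀ x y, HasDerivAt (fun z => Fy x z) (Fyy x y) y)
    (hbxx : ∀ x y, |Fxx x y| ≤ M) (hbxy : ∀ x y, |Fxy x y| ≤ M)
    (hbyy : ∀ x y, |Fyy x y| ≤ M) (x y u v : ℝ) :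
    |F (x + u) (y + v) - F x y - Fx x y * u - Fy x y * v| ≤ M * (|u| + |v|) ^ 2 := by
  have hM : 0 ≤ M := (abs_nonneg _).trans (hbxx x y)
  have hx := abs_sub_sub_deriv_mul_le (fun z => hdx z (y + v)) (fun z => hdxx z (y + v))
    (fun z => hbxx z (y + v)) x (x + u)
  have hxy := abs_sub_le_mul_abs_sub_of_hasDerivAt (hdxy x) (hbxy x) y (y + v)
  have hy := abs_sub_sub_deriv_mul_le (hdy x) (hdyy x) (hbyy x) y (y + v)
  simp only [add_sub_cancel_left] at hx hxy hy
  calc |F (x + u) (y + v) - F x y - Fx x y * u - Fy x y * v|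
      = |(F (x + u) (y + v) - F x (y + v) - Fx x (y + v) * u)
          + (Fx x (y + v) - Fx x y) * u + (F x (y + v) - F x y - Fy x y * v)| := by
        ring_nf
    _ ≤ M * u ^ 2 + M * |v| * |u| + M * v ^ 2 := by
        refine (abs_add_three _ _ _).trans ?_
        rw [abs_mul]
        gcongr
    _ ≤ M * (|u| + |v|) ^ 2 := by
        rw [← sq_abs u, ← sq_abs v]
        nlinarith [mul_nonneg hM (mul_nonneg (abs_nonneg u) (abs_nonneg v))]

lemma abs_diffQuot_sub_le {F Fx Fy : ℝ → ℝ → ℝ} {M : ℝ}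
    (hF : ∀ x y u v,
      |F (x + u) (y + v) - F x y - Fx x y * u - Fy x y * v| ≤ M * (|u| + |v|) ^ 2)
    (x y a b : ℝ) {r : ℝ} (hr : r ≠ 0) :
    |(F (x + r * a) (y + r * b) - F x y) / r - (Fx x y * a + Fy x y * b)|
      ≤ M * (|a| + |b|) ^ 2 * |r| := by
  have hquot : (F (x + r * a) (y + r * b) - F x y) / r - (Fx x y * a + Fy x y * b)
      = (F (x + r * a) (y + r * b) - F x y - Fx x y * (r * a) - Fy x y * (r * b)) / r := by
    field_simp
    ring
  rw [hquot, abs_div, div_le_iff₀ (abs_pos.2 hr)]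
  calc _ ≤ M * (|r * a| + |r * b|) ^ 2 := hF _ _ _ _
    _ = M * (|a| + |b|) ^ 2 * |r| * |r| := by rw [abs_mul, abs_mul]; ring

lemma tendsto_integral_sq_of_abs_le_mul {α : Type*} [MeasurableSpace α] {μ : Measure α}
    [IsFiniteMeasure μ] {E : ℝ → α → ℝ} {C : ℝ} (hE : ∀ r ≠ 0, ∀ᵐ t ∂μ, |E r t| ≤ C * |r|) :
    Tendsto (fun r => ∫ t, E r t ^ 2 ∂μ) (𝓝[≠] 0) (𝓝 0) := by
  have hbound : ∀ r ≠ 0, ∫ t, E r t ^ 2 ∂μ ≤ (C * r) ^ 2 * μ.real univ := fun r hr =>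
    (le_abs_self _).trans <| norm_integral_le_of_norm_le_const <| (hE r hr).mono fun t ht =>
      show ‖E r t ^ 2‖ ≤ (C * r) ^ 2 by
      rw [Real.norm_eq_abs, abs_pow, mul_pow, ← sq_abs r, ← mul_pow]
      exact pow_le_pow_left₀ (abs_nonneg _) ht 2
  refine squeeze_zero' (Eventually.of_forall fun r => integral_nonneg fun t => sq_nonneg _)
    (eventually_nhdsWithin_of_forall hbound) ?_
  have hcont : Continuous fun r : ℝ => (C * r) ^ 2 * μ.real univ := by fun_prop
  simpa using (hcont.tendsto 0).mono_left nhdsWithin_le_nhds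

lemma MeasureTheory.IntegrableOn.intervalIntegrable_of_mem_Icc {g : ℝ → ℝ} {a b t : ℝ}
    (hg : IntegrableOn g (Icc a b)) (ht : t ∈ Icc a b) : IntervalIntegrable g volume a t :=
  (intervalIntegrable_iff_integrableOn_Icc_of_le ht.1).2 (hg.mono_set (Icc_subset_Icc_right ht.2))

lemma Yw_add_const_mul {ω g : ℝ → ℝ} (hω : IntegrableOn ω (Icc 0 1))
    (hg : IntegrableOn g (Icc 0 1)) (r : ℝ) {t : ℝ} (ht : t ∈ Icc (0 : ℝ) 1) :
    Yw (fun τ => ω τ + r * g τ) t = Yw ω t + r * Yw g t := by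
  have h1 : (1 : ℝ) ∈ Icc (0 : ℝ) 1 := right_mem_Icc.2 zero_le_one
  simp only [Yw]
  rw [intervalIntegral.integral_add (hω.intervalIntegrable_of_mem_Icc h1)
      ((hg.intervalIntegrable_of_mem_Icc h1).const_mul r),
    intervalIntegral.integral_add (hω.intervalIntegrable_of_mem_Icc ht)
      ((hg.intervalIntegrable_of_mem_Icc ht).const_mul r),
    intervalIntegral.integral_const_mul, intervalIntegral.integral_const_mul]
  ring

lemma Yw'_add_const_mul {ω g : ℝ → ℝ} (hω : IntervalIntegrable ω volume 0 1)
    (hg : IntervalIntegrable g volume 0 1) (r t : ℝ) :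
    Yw' (fun τ => ω τ + r * g τ) t = Yw' ω t + r * Yw' g t := by
  simp only [Yw']
  rw [intervalIntegral.integral_add hω (hg.const_mul r), intervalIntegral.integral_const_mul]
  ring

lemma continuousOn_primitive_of_integrableOn_Icc {g : ℝ → ℝ} {a b : ℝ} (hab : a ≤ b)
    (hg : IntegrableOn g (Icc a b)) : ContinuousOn (fun t => ∫ s in a..t, g s) (Icc a b) :=
  (intervalIntegral.continuousOn_primitive_interval
    (hg.mono_set (uIcc_subset_Icc (left_mem_Icc.2 hab) (right_mem_Icc.2 hab)))).mono
    Icc_subset_uIcc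

lemma continuousOn_Yw {g : ℝ → ℝ} (hg : IntegrableOn g (Icc 0 1)) :
    ContinuousOn (Yw g) (Icc 0 1) :=
  (continuousOn_id.neg.mul continuousOn_const).add
    (continuousOn_primitive_of_integrableOn_Icc zero_le_one hg)

lemma continuousOn_Yw' {g : ℝ → ℝ} (hg : ContinuousOn g (Icc 0 1)) :
    ContinuousOn (Yw' g) (Icc 0 1) :=
  continuousOn_const.add hg

theorem stmt14_general (f fx fy fxx fxy fyy : ℝ → ℝ → ℝ → ℝ)
    (hfxx : ContBdd3 fxx) (hfxy : ContBdd3 fxy) (hfyy : ContBdd3 fyy)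
    (hdx : ∀ t x y : ℝ, HasDerivAt (fun z => f t z y) (fx t x y) x)
    (hdy : ∀ t x y : ℝ, HasDerivAt (fun z => f t x z) (fy t x y) y)
    (hdxx : ∀ t x y : ℝ, HasDerivAt (fun z => fx t z y) (fxx t x y) x)
    (hdxy : ∀ t x y : ℝ, HasDerivAt (fun z => fx t x z) (fxy t x y) y)
    (hdyy : ∀ t x y : ℝ, HasDerivAt (fun z => fy t x z) (fyy t x y) y)
    (ω : ℝ → ℝ) (hω : ContinuousOn ω (Set.Icc 0 1))
    (h : ℝ → ℝ) (hh : MemLp h 2 (volume.restrict (Set.Ioo (0:ℝ) 1))) :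
    Tendsto (fun r : ℝ =>
      ∫ t in Set.Ioo (0:ℝ) 1,
        ((f t (Yw (fun τ => ω τ + r * ∫ s in (0:ℝ)..τ, h s) t)
              (Yw' (fun τ => ω τ + r * ∫ s in (0:ℝ)..τ, h s) t)
            - f t (Yw ω t) (Yw' ω t)) / r
          - (fx t (Yw ω t) (Yw' ω t) * Yw (fun τ => ∫ s in (0:ℝ)..τ, h s) t
            + fy t (Yw ω t) (Yw' ω t) * Yw' (fun τ => ∫ s in (0:ℝ)..τ, h s) t)) ^ 2)
      (nhdsWithin (0:ℝ) {(0:ℝ)}ᶜ) (nhds (0:ℝ)) := by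
  obtain ⟨Cxx, hCxx⟩ := hfxx.2
  obtain ⟨Cxy, hCxy⟩ := hfxy.2
  obtain ⟨Cyy, hCyy⟩ := hfyy.2
  set M := max Cxx (max Cxy Cyy)
  have hH := continuousOn_primitive_of_integrableOn_Icc zero_le_one
    ((integrableOn_Icc_iff_integrableOn_Ioo (f := h)).2 (hh.integrable one_le_two))
  obtain ⟨CA, hCA⟩ := isCompact_Icc.exists_bound_of_continuousOn
    (continuousOn_Yw hH.integrableOn_Icc)
  obtain ⟨CB, hCB⟩ := isCompact_Icc.exists_bound_of_continuousOn (continuousOn_Yw' hH)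
  refine tendsto_integral_sq_of_abs_le_mul (C := M * (CA + CB) ^ 2) fun r hr =>
    ae_restrict_of_forall_mem measurableSet_Ioo fun t ht => ?_
  have ht' := Ioo_subset_Icc_self ht
  have hM : 0 ≤ M := (abs_nonneg _).trans ((hCxx t ht' 0 0).trans (le_max_left _ _))
  have htaylor := abs_taylor_remainder₂_le (hdx t) (hdy t) (hdxx t) (hdxy t) (hdyy t)
    (fun x y => (hCxx t ht' x y).trans (le_max_left _ _))
    (fun x y => (hCxy t ht' x y).trans ((le_max_left _ _).trans (le_max_right _ _)))
    (fun x y => (hCyy t ht' x y).trans ((le_max_right _ _).trans (le_max_right _ _)))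
  rw [Yw_add_const_mul hω.integrableOn_Icc hH.integrableOn_Icc r ht',
    Yw'_add_const_mul (hω.intervalIntegrable_of_Icc zero_le_one)
      (hH.intervalIntegrable_of_Icc zero_le_one) r t]
  refine (abs_diffQuot_sub_le htaylor _ _ _ _ hr).trans ?_
  gcongr
  exacts [hCA t ht', hCB t ht']

/-- the difference quotient of `f(·, Y(ω + r h̃), Y'(ω + r h̃))` converges
in `L²(0,1)`, as `r → 0`, to `f_x(·,Y(ω),Y'(ω))·Y(h̃) + f_y(·,Y(ω),Y'(ω))·Y'(h̃)`. -/
theorem stmt14 (f fx fy fxx fxy fyy : ℝ → ℝ → ℝ → ℝ)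
    (hf : ContBdd3 f) (hfx : ContBdd3 fx) (hfy : ContBdd3 fy)
    (hfxx : ContBdd3 fxx) (hfxy : ContBdd3 fxy) (hfyy : ContBdd3 fyy)
    (hdx : ∀ t x y : ℝ, HasDerivAt (fun z => f t z y) (fx t x y) x)
    (hdy : ∀ t x y : ℝ, HasDerivAt (fun z => f t x z) (fy t x y) y)
    (hdxx : ∀ t x y : ℝ, HasDerivAt (fun z => fx t z y) (fxx t x y) x)
    (hdxy : ∀ t x y : ℝ, HasDerivAt (fun z => fx t x z) (fxy t x y) y)
    (hdyy : ∀ t x y : ℝ, HasDerivAt (fun z => fy t x z) (fyy t x y) y)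
    (ω : ℝ → ℝ) (hω : ContinuousOn ω (Set.Icc 0 1)) (hω0 : ω 0 = 0)
    (h : ℝ → ℝ) (hh : MemLp h 2 (volume.restrict (Set.Ioo (0:ℝ) 1))) :
    Tendsto (fun r : ℝ =>
      ∫ t in Set.Ioo (0:ℝ) 1,
        ((f t (Yw (fun τ => ω τ + r * ∫ s in (0:ℝ)..τ, h s) t)
              (Yw' (fun τ => ω τ + r * ∫ s in (0:ℝ)..τ, h s) t)
            - f t (Yw ω t) (Yw' ω t)) / r
          - (fx t (Yw ω t) (Yw' ω t) * Yw (fun τ => ∫ s in (0:ℝ)..τ, h s) t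
            + fy t (Yw ω t) (Yw' ω t) * Yw' (fun τ => ∫ s in (0:ℝ)..τ, h s) t)) ^ 2)
      (nhdsWithin (0:ℝ) {(0:ℝ)}ᶜ) (nhds (0:ℝ)) :=
  stmt14_general f fx fy fxx fxy fyy hfxx hfxy hfyy hdx hdy hdxx hdxy hdyy ω hω h hh
end
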